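/- arXiv:1304.2512 — 9 statements merged into one kernel-verified Lean document; each statement's English description precedes it below -/
import Mathlib

section
/- Let E be a vector space over 𝕜 (𝕜 = ℝ or ℂ) and let s be a subset of E such that for every linear functional f : E → 𝕜 the image f(s) is a bounded subset of 𝕜. Then the linear span of s is a finite-dimensional subspace of E. -/
/-! An infinite-dimensional span contains an infinite linearly independent sequence `v n`.
Linear functionals may be prescribed arbitrarily on a linearly independent family, so some
`f` has `f (v n) = n`, and `f` is unbounded on the set. -/

open Submodule

theorem LinearIndependent.exists_linearMap_apply_eq {K V V' ι : Type*} [DivisionRing K]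
    [AddCommGroup V] [Module K V] [AddCommGroup V'] [Module K V'] {v : ι → V}
    (hv : LinearIndependent K v) (c : ι → V') : ∃ f : V →ₗ[K] V', ∀ i, f (v i) = c i := by
  let b := Module.Basis.span hv
  obtain ⟨f, hf⟩ := LinearMap.exists_extend (b.constr ℕ c)
  refine ⟨f, fun i => ?_⟩
  calc f (v i) = (f ∘ₗ (span K (Set.range v)).subtype) (b i) := by
        rw [Module.Basis.span_apply]; rfl
    _ = c i := by rw [hf, Module.Basis.constr_basis]

theorem exists_linearIndependent_nat_of_not_finiteDimensional_span {K V : Type*} [DivisionRing K]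
    [AddCommGroup V] [Module K V] {s : Set V} (h : ¬FiniteDimensional K (span K s)) :
    ∃ v : ℕ → V, LinearIndependent K v ∧ ∀ n, v n ∈ s := by
  obtain ⟨t, hts, hspan, hli⟩ := exists_linearIndependent K s
  have ht : t.Infinite := fun hfin => h (hspan ▸ FiniteDimensional.span_of_finite K hfin)
  let g := ht.natEmbedding
  exact ⟨fun n => g n, hli.comp g g.injective, fun n => hts (g n).2⟩

/-- Every σ(E,E*)-bounded subset of a vector space `E` over `𝕜 = ℝ` or `ℂ`
(i.e. every set whose image under every linear functional is bounded in `𝕜`)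
spans a finite-dimensional subspace. -/
theorem weakStar_bounded_finiteDimensional
    {𝕜 : Type*} [RCLike 𝕜] {E : Type*} [AddCommGroup E] [Module 𝕜 E]
    (s : Set E) (hs : ∀ f : E →ₗ[𝕜] 𝕜, Bornology.IsBounded (f '' s)) :
    FiniteDimensional 𝕜 (Submodule.span 𝕜 s) := by
  by_contra h
  obtain ⟨v, hv, hvs⟩ := exists_linearIndependent_nat_of_not_finiteDimensional_span h
  obtain ⟨f, hf⟩ := hv.exists_linearMap_apply_eq (fun n => (n : 𝕜))
  obtain ⟨C, hC⟩ := (hs f).exists_norm_le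
  obtain ⟨n, hn⟩ := exists_nat_gt C
  have hle := hC (f (v n)) ⟨v n, hvs n, rfl⟩
  rw [hf, RCLike.norm_natCast] at hle
  linarith
end

section
/- Let E be a vector space over 𝕜 (𝕜 = ℝ or ℂ). The algebraic dual E*, equipped with the weak-* topology σ(E*,E) of pointwise convergence, is a barrelled topological vector space; equivalently, every seminorm on E* that is lower semicontinuous for this topology is continuous. -/
/-!
A basis `b` of `E` identifies `E →ₗ[𝕜] 𝕜` with `ι → 𝕜` via `f ↦ (f (b i))ᵢ`, and the pointwise
topology with the product topology, because each evaluation `f ↦ f x` is a finite linear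
combination of the coordinates `f (b i)`. So it suffices that `ι → 𝕜` is barrelled.

Let `p` be a lower semicontinuous seminorm on `ι → 𝕜`. If `p (Pi.single i 1) ≠ 0` for infinitely
many `i`, extending by zero from countably many of them pulls `p` back to a lower semicontinuous,
hence (Baire) continuous, seminorm on the Fréchet space `ℕ → 𝕜`; but it is `> 1` on suitable
multiples of the unit vectors, which still tend to `0` coordinatewise. So `p` kills all but a
finite set `F` of unit vectors, and approximating `x` by its finite truncations, lower
semicontinuity gives `p x ≤ ∑ i ∈ F, ‖x i‖ * p (Pi.single i 1)`, which makes `p` continuous.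
-/

open Filter Topology

theorem Function.continuous_extend {α β M : Type*} [TopologicalSpace M] (f : α → β)
    (e' : β → M) : Continuous fun g : α → M => Function.extend f g e' := by
  classical
  refine continuous_pi fun b => ?_
  simp only [Function.extend_def]
  split_ifs
  exacts [continuous_apply _, continuous_const]

theorem Function.ExtendByZero.linearMap_single {R α β : Type*} [Semiring R] [DecidableEq α]
    [DecidableEq β] {f : α → β} (hf : f.Injective) (a : α) (r : R) :
    Function.ExtendByZero.linearMap R f (Pi.single a r) = Pi.single (f a) r := by
  ext b
  rw [linearMap_apply]
  by_cases hb : ∃ a', f a' = b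
  · obtain ⟨a', rfl⟩ := hb
    simp [hf.extend_apply, Pi.single_apply, hf.eq_iff]
  · rw [Function.extend_apply' _ _ _ hb, Pi.single_apply,
      if_neg (by rintro rfl; exact hb ⟨a, rfl⟩)]
    rfl

namespace Seminorm

variable {𝕜 ι : Type*} [NontriviallyNormedField 𝕜] [DecidableEq ι]

theorem finite_setOf_apply_single_ne_zero [CompleteSpace 𝕜] {p : Seminorm 𝕜 (ι → 𝕜)}
    (hp : LowerSemicontinuous p) : {i | p (Pi.single i 1) ≠ 0}.Finite := by
  refine Set.not_infinite.1 fun hinf => ?_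
  let f : ℕ → ι := fun n => hinf.natEmbedding _ n
  have hf : f.Injective := Subtype.val_injective.comp (hinf.natEmbedding _).injective
  have hpf (n : ℕ) : p (Pi.single (f n) 1) ≠ 0 := (hinf.natEmbedding _ n).2
  let q := p.comp (Function.ExtendByZero.linearMap 𝕜 f)
  have hq : Continuous q :=
    q.continuous_of_lowerSemicontinuous (hp.comp (Function.continuous_extend f 0))
  have hc (n : ℕ) : ∃ c : 𝕜, 1 < ‖c‖ * p (Pi.single (f n) 1) := by
    have hpos := (apply_nonneg p _).lt_of_ne' (hpf n)
    obtain ⟨c, hc⟩ := NormedField.exists_lt_norm 𝕜 (p (Pi.single (f n) 1))⁻¹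
    exact ⟨c, by rwa [inv_lt_iff_one_lt_mul₀ hpos] at hc⟩
  choose c hc using hc
  have hq_big (n : ℕ) : 1 < q (c n • Pi.single n 1) := by
    rw [map_smul_eq_mul, comp_apply, Function.ExtendByZero.linearMap_single hf]
    exact hc n
  have hlim : Tendsto (fun n => c n • (Pi.single n 1 : ℕ → 𝕜)) atTop (𝓝 0) := by
    refine tendsto_pi_nhds.2 fun j => tendsto_const_nhds.congr' ?_
    filter_upwards [eventually_gt_atTop j] with n hn
    simp [hn.ne]
  obtain ⟨n, hn⟩ :=
    (((hq.tendsto 0).comp hlim).eventually (gt_mem_nhds (by simp : q 0 < 1))).exists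
  exact lt_asymm (hq_big n) hn

theorem le_sum_norm_mul_apply_single {p : Seminorm 𝕜 (ι → 𝕜)} (hp : LowerSemicontinuous p)
    {F : Finset ι} (hF : ∀ i ∉ F, p (Pi.single i 1) = 0) (x : ι → 𝕜) :
    p x ≤ ∑ i ∈ F, ‖x i‖ * p (Pi.single i 1) := by
  have hfin (G : Finset ι) :
      p (∑ i ∈ G, Pi.single i (x i)) ≤ ∑ i ∈ G, ‖x i‖ * p (Pi.single i 1) := by
    refine (Finset.le_sum_of_subadditive p (map_zero p).le (map_add_le_add p) G _).trans_eq ?_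
    refine Finset.sum_congr rfl fun i _ => ?_
    rw [← map_smul_eq_mul, ← Pi.single_smul', smul_eq_mul, mul_one]
  have hlim : Tendsto (fun G : Finset ι => ∑ i ∈ G, Pi.single i (x i)) atTop (𝓝 x) := by
    refine tendsto_pi_nhds.2 fun j => tendsto_const_nhds.congr' ?_
    filter_upwards [eventually_ge_atTop {j}] with G hG
    simp [Finset.sum_pi_single, Finset.singleton_subset_iff.1 hG]
  refine le_of_forall_lt fun y hy => ?_
  obtain ⟨G, hyG, hFG⟩ := ((hlim.eventually (hp x y hy)).and (eventually_ge_atTop F)).exists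
  calc y < p (∑ i ∈ G, Pi.single i (x i)) := hyG
    _ ≤ ∑ i ∈ G, ‖x i‖ * p (Pi.single i 1) := hfin G
    _ = ∑ i ∈ F, ‖x i‖ * p (Pi.single i 1) :=
      (Finset.sum_subset hFG fun i _ hi => by rw [hF i hi, mul_zero]).symm

end Seminorm

instance Pi.barrelledSpace {𝕜 ι : Type*} [NontriviallyNormedField 𝕜] [CompleteSpace 𝕜] :
    BarrelledSpace 𝕜 (ι → 𝕜) where
  continuous_of_lowerSemicontinuous p hp := by
    classical
    set F := (p.finite_setOf_apply_single_ne_zero hp).toFinset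
    have hF (i : ι) (hi : i ∉ F) : p (Pi.single i 1) = 0 := by simpa [F] using hi
    refine Seminorm.continuous_of_continuousAt_zero ?_
    rw [ContinuousAt, map_zero]
    have hbound : Continuous fun x : ι → 𝕜 => ∑ i ∈ F, ‖x i‖ * p (Pi.single i 1) := by
      fun_prop
    refine tendsto_of_tendsto_of_tendsto_of_le_of_le tendsto_const_nhds ?_ (apply_nonneg p)
      (p.le_sum_norm_mul_apply_single hp hF)
    simpa using hbound.tendsto 0

theorem BarrelledSpace.induced {𝕜 E F : Type*} [NormedField 𝕜] [AddCommGroup E]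
    [Module 𝕜 E] [AddCommGroup F] [Module 𝕜 F] [TopologicalSpace F] [BarrelledSpace 𝕜 F]
    (e : E ≃ₗ[𝕜] F) : @BarrelledSpace 𝕜 E _ _ _ (.induced e ‹_›) := by
  let _ : TopologicalSpace E := .induced e ‹_›
  refine ⟨fun p hp => ?_⟩
  have he : Continuous e := continuous_induced_dom
  have he_symm : Continuous e.symm := continuous_induced_rng.2 <| by
    simpa [Function.comp_def] using continuous_id'
  have hq : Continuous (p.comp e.symm.toLinearMap) :=
    Seminorm.continuous_of_lowerSemicontinuous _ (hp.comp he_symm)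
  simpa [Function.comp_def] using hq.comp he

theorem Module.Basis.induced_coeFn_eq_induced_apply_basis {ι R M N : Type*} [Semiring R]
    [AddCommMonoid M] [Module R M] [AddCommMonoid N] [Module R N] [TopologicalSpace N]
    [ContinuousAdd N] [ContinuousConstSMul R N] (b : Module.Basis ι R M) :
    TopologicalSpace.induced (fun (f : M →ₗ[R] N) x => f x) Pi.topologicalSpace =
      TopologicalSpace.induced (fun (f : M →ₗ[R] N) i => f (b i)) Pi.topologicalSpace := by
  refine le_antisymm (continuous_iff_le_induced.1 ?_) (continuous_iff_le_induced.1 ?_)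
  · let _ : TopologicalSpace (M →ₗ[R] N) := .induced (fun f x => f x) Pi.topologicalSpace
    exact continuous_pi fun i => (continuous_apply (b i)).comp continuous_induced_dom
  · let _ : TopologicalSpace (M →ₗ[R] N) := .induced (fun f i => f (b i)) Pi.topologicalSpace
    refine continuous_pi fun x => ?_
    have hx : (fun f : M →ₗ[R] N => f x) =
        fun f => ∑ i ∈ (b.repr x).support, b.repr x i • f (b i) := by
      ext f
      conv_lhs => rw [← b.linearCombination_repr x]
      simp [Finsupp.linearCombination_apply, Finsupp.sum]
    rw [hx]
    refine continuous_finsetSum _ fun i _ => ?_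
    have hi : Continuous fun f : M →ₗ[R] N => f (b i) :=
      (continuous_apply i).comp (continuous_induced_dom (f := fun (f : M →ₗ[R] N) i => f (b i)))
    exact hi.const_smul _

/-- The algebraic dual `E* = E →ₗ[𝕜] 𝕜` of a vector space over `𝕜 = ℝ` or `ℂ`,
equipped with the weak-* topology `σ(E*, E)` of pointwise convergence (the
topology induced from the product topology on `E → 𝕜`), is barrelled:
every lower semicontinuous seminorm on it is continuous. -/
theorem algebraicDual_barrelledSpace_weakStar
    {𝕜 : Type*} [RCLike 𝕜] {E : Type*} [AddCommGroup E] [Module 𝕜 E] :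
    @BarrelledSpace 𝕜 (E →ₗ[𝕜] 𝕜) _ _ _
      (TopologicalSpace.induced (fun (f : E →ₗ[𝕜] 𝕜) (x : E) => f x)
        (Pi.topologicalSpace (Y := fun _ : E => 𝕜))) := by
  let b := Module.Basis.ofVectorSpace 𝕜 E
  rw [b.induced_coeFn_eq_induced_apply_basis]
  exact BarrelledSpace.induced (b.constr (M' := 𝕜) 𝕜).symm
end

section
/- Let Ω ⊆ ℝⁿ be open and let (Ωᵢ)_{i ∈ I} be a family of open sets with Ω = ⋃_{i ∈ I} Ωᵢ. Let T ∈ D*(Ω) be a linear functional on D(Ω) such that for every i ∈ I and every φ ∈ D(Ω) with tsupport φ ⊆ Ωᵢ one has T(φ) = 0. Then T = 0, i.e., T(φ) = 0 for every φ ∈ D(Ω). -/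
/-!
A partition of unity `ρ` subordinate to the cover `Ωᵢ` splits a test function `φ` into the
pieces `ρᵢ φ`, each supported in its `Ωᵢ`. Since `ρ` is locally finite and `φ` has compact
support, only finitely many pieces are nonzero, so by linearity `T φ = ∑ᵢ T (ρᵢ φ) = 0`.
-/

/-- `D(Ω)`: smooth functions `ℝⁿ → ℂ` with compact support contained in `Ω`. -/
noncomputable def Dspace (n : ℕ) (Ω : Set (Fin n → ℝ)) :
    Submodule ℂ ((Fin n → ℝ) → ℂ) where
  carrier := {φ | ContDiff ℝ (⊤ : ℕ∞) φ ∧ HasCompactSupport φ ∧ tsupport φ ⊆ Ω}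
  add_mem' hf hg := ⟨hf.1.add hg.1, hf.2.1.add hg.2.1,
    (tsupport_add _ _).trans (Set.union_subset hf.2.2 hg.2.2)⟩
  zero_mem' := ⟨contDiff_const, HasCompactSupport.zero,
    by simp [tsupport, Function.support_zero]⟩
  smul_mem' c f hf := ⟨hf.1.const_smul c,
    hf.2.1.mono (Function.support_const_smul_subset c f),
    (closure_mono (Function.support_const_smul_subset c f)).trans hf.2.2⟩

lemma mem_Dspace {n : ℕ} {Ω : Set (Fin n → ℝ)} {φ : (Fin n → ℝ) → ℂ} :
    φ ∈ Dspace n Ω ↔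
      ContDiff ℝ (⊤ : ℕ∞) φ ∧ HasCompactSupport φ ∧ tsupport φ ⊆ Ω :=
  Iff.rfl

open Function

theorem PartitionOfUnity.exists_finset_sum_smul_eq {ι X M : Type*} [TopologicalSpace X]
    [AddCommMonoid M] [Module ℝ M] {s : Set X} (ρ : PartitionOfUnity ι X s) {f : X → M}
    (hf : HasCompactSupport f) (hfs : tsupport f ⊆ s) :
    ∃ t : Finset ι, ∑ i ∈ t, (fun x => ρ i x • f x) = f := by
  have hfin : {i | (support (ρ i) ∩ tsupport f).Nonempty}.Finite :=
    ρ.locallyFinite.finite_nonempty_inter_compact hf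
  refine ⟨hfin.toFinset, funext fun x => ?_⟩
  by_cases hx : x ∈ tsupport f
  · have hsub : ρ.finsupport x ⊆ hfin.toFinset := fun i hi =>
      hfin.mem_toFinset.2 ⟨x, (ρ.mem_finsupport x).1 hi, hx⟩
    simp only [Finset.sum_apply, ← Finset.sum_smul,
      ρ.sum_finsupport' (hfs hx) hsub, one_smul]
  · simp [image_eq_zero_of_notMem_tsupport hx]

theorem smul_mem_Dspace {n : ℕ} {Ω : Set (Fin n → ℝ)} {ρ : (Fin n → ℝ) → ℝ}
    (hρ : ContDiff ℝ (⊤ : ℕ∞) ρ) {φ : (Fin n → ℝ) → ℂ} (hφ : φ ∈ Dspace n Ω) :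
    (fun x => ρ x • φ x) ∈ Dspace n Ω := by
  obtain ⟨hφ_smooth, hφ_compact, hφΩ⟩ := mem_Dspace.1 hφ
  exact mem_Dspace.2 ⟨hρ.smul hφ_smooth, hφ_compact.mono (support_smul_subset_right ρ φ),
    (tsupport_smul_subset_right ρ φ).trans hφΩ⟩

theorem Dspace.exists_finset_sum_eq_of_tsupport_subset_iUnion {n : ℕ} {Ω : Set (Fin n → ℝ)}
    {ι : Type*} {U : ι → Set (Fin n → ℝ)} (hU : ∀ i, IsOpen (U i)) (φ : Dspace n Ω)
    (hφ : tsupport (φ : (Fin n → ℝ) → ℂ) ⊆ ⋃ i, U i) :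
    ∃ (t : Finset ι) (ψ : ι → Dspace n Ω),
      (∀ i, tsupport (ψ i : (Fin n → ℝ) → ℂ) ⊆ U i) ∧ φ = ∑ i ∈ t, ψ i := by
  obtain ⟨ρ, hρU⟩ := SmoothPartitionOfUnity.exists_isSubordinate
    (I := modelWithCornersSelf ℝ (Fin n → ℝ)) (isClosed_tsupport _) U hU hφ
  obtain ⟨t, ht⟩ := ρ.toPartitionOfUnity.exists_finset_sum_smul_eq φ.2.2.1 subset_rfl
  refine ⟨t, fun i => ⟨fun x => ρ i x • (φ : (Fin n → ℝ) → ℂ) x,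
      smul_mem_Dspace (ρ i).contMDiff.contDiff φ.2⟩,
    fun i => (tsupport_smul_subset_left _ _).trans (hρU i), Subtype.ext ?_⟩
  simpa using ht.symm

theorem algebraicDual_local_vanishing_general
    {n : ℕ} {Ω : Set (Fin n → ℝ)}
    {ι : Type*} (Ωi : ι → Set (Fin n → ℝ))
    (hopen : ∀ i, IsOpen (Ωi i)) (hcover : Ω = ⋃ i, Ωi i)
    (T : Dspace n Ω →ₗ[ℂ] ℂ)
    (hT : ∀ i, ∀ φ : Dspace n Ω, tsupport (φ : (Fin n → ℝ) → ℂ) ⊆ Ωi i → T φ = 0) :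
    ∀ φ : Dspace n Ω, T φ = 0 := by
  intro φ
  obtain ⟨t, ψ, hψ, rfl⟩ :=
    Dspace.exists_finset_sum_eq_of_tsupport_subset_iUnion hopen φ (hcover ▸ φ.2.2.2)
  rw [map_sum]
  exact Finset.sum_eq_zero fun i _ => hT i (ψ i) (hψ i)

/-- Locality: if a linear functional `T` on `D(Ω)` vanishes on every member of an
open cover of `Ω` (i.e. on all test functions supported in some `Ωᵢ`), then `T = 0`. -/
theorem algebraicDual_local_vanishing
    {n : ℕ} {Ω : Set (Fin n → ℝ)} (hΩ : IsOpen Ω)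
    {ι : Type*} (Ωi : ι → Set (Fin n → ℝ))
    (hopen : ∀ i, IsOpen (Ωi i)) (hcover : Ω = ⋃ i, Ωi i)
    (T : Dspace n Ω →ₗ[ℂ] ℂ)
    (hT : ∀ i, ∀ φ : Dspace n Ω, tsupport (φ : (Fin n → ℝ) → ℂ) ⊆ Ωi i → T φ = 0) :
    ∀ φ : Dspace n Ω, T φ = 0 :=
  algebraicDual_local_vanishing_general Ωi hopen hcover T hT
end

section
/- Let Ω ⊆ ℝⁿ be open and let (Ωᵢ)_{i ∈ I} be a family of open sets with Ω = ⋃_{i ∈ I} Ωᵢ. For each i ∈ I let Tᵢ ∈ D*(Ωᵢ) be a linear functional on D(Ωᵢ), and assume the family is compatible: whenever φ is a smooth function with compact topological support contained in Ωᵢ ∩ Ωⱼ, then Tᵢ(φ) = Tⱼ(φ). Then there exists a unique linear functional T ∈ D*(Ω) such that for every i ∈ I and every φ ∈ D(Ω) with tsupport φ ⊆ Ωᵢ one has T(φ) = Tᵢ(φ). -/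
/-! Summing local test functions gives a linear map `S : ⊕ᵢ D(Ωᵢ) → D(Ω)`, and the family
`(Tᵢ)` gives `∑ᵢ Tᵢ : ⊕ᵢ D(Ωᵢ) → ℂ`; a functional `T` on `D(Ω)` restricts to every `Tᵢ` exactly
when `T ∘ S = ∑ᵢ Tᵢ`. A smooth partition of unity `(gⱼ)` subordinate to the cover, on a compact
set carrying all the supports involved, shows that `S` is onto and that `∑ᵢ Tᵢ` vanishes on
`ker S`: if `∑ᵢ ψᵢ = 0`, then
`∑ᵢ Tᵢ ψᵢ = ∑ᵢ ∑ⱼ Tᵢ (gⱼ ψᵢ) = ∑ⱼ Tⱼ (gⱼ ∑ᵢ ψᵢ) = 0` by compatibility on `Ωᵢ ∩ Ωⱼ`.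
So `∑ᵢ Tᵢ` factors uniquely through `S`. -/

open Function Set
open scoped Manifold ContDiff

theorem LinearMap.existsUnique_comp_eq_of_surjective {R M N P : Type*} [Ring R]
    [AddCommGroup M] [AddCommGroup N] [AddCommGroup P] [Module R M] [Module R N] [Module R P]
    {f : M →ₗ[R] N} (hf : Surjective f) {g : M →ₗ[R] P} (hfg : ker f ≤ ker g) :
    ∃! h : N →ₗ[R] P, h ∘ₗ f = g := by
  set h₀ := (ker f).liftQ g hfg ∘ₗ (f.quotKerEquivOfSurjective hf).symm.toLinearMap
  have hh₀ : h₀ ∘ₗ f = g := by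
    ext x
    simp [h₀]
  exact ⟨h₀, hh₀, fun h hh => (cancel_right hf).mp (hh.trans hh₀.symm)⟩

theorem IsCompact.exists_finset_contDiff_sum_eq_one {E ι : Type*} [NormedAddCommGroup E]
    [NormedSpace ℝ E] [FiniteDimensional ℝ E] {K : Set E} (hK : IsCompact K) {U : ι → Set E}
    (hU : ∀ i, IsOpen (U i)) (hKU : K ⊆ ⋃ i, U i) :
    ∃ (g : ι → E → ℝ) (u : Finset ι), (∀ i, ContDiff ℝ ∞ (g i)) ∧
      (∀ i, tsupport (g i) ⊆ U i) ∧ ∀ x ∈ K, ∑ i ∈ u, g i x = 1 := by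
  obtain ⟨ρ, hρ⟩ := SmoothPartitionOfUnity.exists_isSubordinate 𝓘(ℝ, E) hK.isClosed U hU hKU
  have hfin := ρ.locallyFinite.finite_nonempty_inter_compact hK
  refine ⟨fun i => ρ i, hfin.toFinset, fun i => (ρ i).contMDiff.contDiff, hρ,
    fun x hx => ρ.sum_finsupport' x hx fun i hi => ?_⟩
  rw [Finite.mem_toFinset]
  exact ⟨x, (ρ.mem_finsupport x).mp hi, hx⟩

namespace Dspace

variable {n : ℕ}

theorem mono {U V : Set (Fin n → ℝ)} (h : U ⊆ V) : Dspace n U ≤ Dspace n V :=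
  fun _ hφ => ⟨hφ.1, hφ.2.1, hφ.2.2.trans h⟩

noncomputable def inclusion {U V : Set (Fin n → ℝ)} (h : U ⊆ V) : Dspace n U →ₗ[ℂ] Dspace n V :=
  Submodule.inclusion (mono h)

theorem smul_mem_inter {g : (Fin n → ℝ) → ℝ} (hg : ContDiff ℝ ∞ g) {U V : Set (Fin n → ℝ)}
    (hgV : tsupport g ⊆ V) {φ : (Fin n → ℝ) → ℂ} (hφ : φ ∈ Dspace n U) :
    g • φ ∈ Dspace n (U ∩ V) :=
  ⟨hg.smul hφ.1, hφ.2.1.smul_left, subset_inter ((tsupport_smul_subset_right g φ).trans hφ.2.2)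
    ((tsupport_smul_subset_left g φ).trans hgV)⟩

noncomputable def smulLeft (g : (Fin n → ℝ) → ℝ) (hg : ContDiff ℝ ∞ g)
    {U V : Set (Fin n → ℝ)} (hgV : tsupport g ⊆ V) : Dspace n U →ₗ[ℂ] Dspace n (U ∩ V) where
  toFun φ := ⟨g • (φ : (Fin n → ℝ) → ℂ), smul_mem_inter hg hgV φ.2⟩
  map_add' φ ψ := Subtype.ext <| smul_add g φ.1 ψ.1
  map_smul' c φ := Subtype.ext <| smul_comm g c φ.1

@[simp]
theorem coe_smulLeft (g : (Fin n → ℝ) → ℝ) (hg : ContDiff ℝ ∞ g) {U V : Set (Fin n → ℝ)}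
    (hgV : tsupport g ⊆ V) (φ : Dspace n U) :
    (smulLeft g hg hgV φ : (Fin n → ℝ) → ℂ) = g • (φ : (Fin n → ℝ) → ℂ) :=
  rfl

theorem eq_sum_smulLeft {ι : Type*} {U K : Set (Fin n → ℝ)} {V : ι → Set (Fin n → ℝ)}
    {g : ι → (Fin n → ℝ) → ℝ} (hg : ∀ i, ContDiff ℝ ∞ (g i)) (hgV : ∀ i, tsupport (g i) ⊆ V i)
    {u : Finset ι} (hgK : ∀ x ∈ K, ∑ i ∈ u, g i x = 1) (φ : Dspace n U)
    (hφK : tsupport (φ : (Fin n → ℝ) → ℂ) ⊆ K) :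
    φ = ∑ i ∈ u, inclusion inter_subset_left (smulLeft (g i) (hg i) (hgV i) φ) := by
  ext x
  simp only [Submodule.coe_sum, inclusion, Submodule.coe_inclusion, coe_smulLeft,
    Finset.sum_apply, Pi.smul_apply', ← Finset.sum_smul]
  by_cases hx : x ∈ tsupport (φ : (Fin n → ℝ) → ℂ)
  · rw [hgK x (hφK hx), one_smul]
  · simp [image_eq_zero_of_notMem_tsupport hx]

variable {ι : Type*} [DecidableEq ι] (Ωi : ι → Set (Fin n → ℝ))

noncomputable def sumLocal : (Π₀ i, Dspace n (Ωi i)) →ₗ[ℂ] Dspace n (⋃ i, Ωi i) :=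
  DFinsupp.lsum ℂ fun i => inclusion (subset_iUnion Ωi i)

theorem sumLocal_single (i : ι) (ψ : Dspace n (Ωi i)) :
    sumLocal Ωi (DFinsupp.single i ψ) = inclusion (subset_iUnion Ωi i) ψ :=
  DFinsupp.lsum_single (M := fun i => Dspace n (Ωi i)) ℂ _ i ψ

theorem sumLocal_surjective (hopen : ∀ i, IsOpen (Ωi i)) : Surjective (sumLocal Ωi) := by
  intro φ
  obtain ⟨g, u, hg, hgΩ, hgK⟩ := φ.2.2.1.isCompact.exists_finset_contDiff_sum_eq_one hopen φ.2.2.2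
  refine ⟨∑ i ∈ u, DFinsupp.single i
    (inclusion inter_subset_right (smulLeft (g i) (hg i) (hgΩ i) φ)), ?_⟩
  conv_rhs => rw [eq_sum_smulLeft hg hgΩ hgK φ subset_rfl]
  rw [map_sum]
  exact Finset.sum_congr rfl fun i _ => sumLocal_single Ωi i _

theorem ker_sumLocal_le_ker_lsum (hopen : ∀ i, IsOpen (Ωi i))
    (Ti : ∀ i, Dspace n (Ωi i) →ₗ[ℂ] ℂ)
    (hcompat : ∀ i j (χ : Dspace n (Ωi i ∩ Ωi j)),
      Ti i (inclusion inter_subset_left χ) = Ti j (inclusion inter_subset_right χ)) :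
    LinearMap.ker (sumLocal Ωi) ≤ LinearMap.ker (DFinsupp.lsum ℂ Ti) := by
  classical
  intro x hx
  rw [LinearMap.mem_ker] at hx ⊢
  have hsum : ∑ i ∈ x.support, (x i : (Fin n → ℝ) → ℂ) = 0 := by
    simpa [sumLocal, DFinsupp.sumAddHom_apply, DFinsupp.sum, inclusion] using
      congrArg Subtype.val hx
  set K := ⋃ i ∈ x.support, tsupport (x i : (Fin n → ℝ) → ℂ)
  have hK : IsCompact K :=
    x.support.finite_toSet.isCompact_biUnion fun i _ => (mem_Dspace.mp (x i).2).2.1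
  have hxK : ∀ i ∈ x.support, tsupport (x i : (Fin n → ℝ) → ℂ) ⊆ K := fun i hi =>
    subset_iUnion₂ (s := fun i _ => tsupport (x i : (Fin n → ℝ) → ℂ)) i hi
  obtain ⟨g, u, hg, hgΩ, hgK⟩ := hK.exists_finset_contDiff_sum_eq_one hopen
    (iUnion₂_subset fun i _ => (mem_Dspace.mp (x i).2).2.2.trans (subset_iUnion Ωi i))
  let cut (i j : ι) : Dspace n (Ωi i ∩ Ωi j) := smulLeft (g j) (hg j) (hgΩ j) (x i)
  have hcut : ∀ j, ∑ i ∈ x.support, inclusion inter_subset_right (cut i j) = 0 := fun j =>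
    Subtype.ext <| by
      simp only [cut, Submodule.coe_sum, inclusion, Submodule.coe_inclusion, coe_smulLeft,
        ← Finset.smul_sum, hsum, smul_zero, Submodule.coe_zero]
  calc DFinsupp.lsum ℂ Ti x
      = ∑ i ∈ x.support, Ti i (x i) := by
        rw [DFinsupp.lsum_apply_apply, DFinsupp.sumAddHom_apply]; rfl
    _ = ∑ i ∈ x.support, ∑ j ∈ u, Ti i (inclusion inter_subset_left (cut i j)) :=
        Finset.sum_congr rfl fun i hi => by
          rw [← map_sum, ← eq_sum_smulLeft hg hgΩ hgK (x i) (hxK i hi)]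
    _ = ∑ i ∈ x.support, ∑ j ∈ u, Ti j (inclusion inter_subset_right (cut i j)) := by
        simp only [hcompat]
    _ = ∑ j ∈ u, Ti j (∑ i ∈ x.support, inclusion inter_subset_right (cut i j)) := by
        rw [Finset.sum_comm]
        simp only [map_sum]
    _ = 0 := by simp [hcut]

theorem restricts_iff_comp_sumLocal (Ti : ∀ i, Dspace n (Ωi i) →ₗ[ℂ] ℂ)
    (T : Dspace n (⋃ i, Ωi i) →ₗ[ℂ] ℂ) :
    (∀ i, ∀ φ : Dspace n (⋃ i, Ωi i), ∀ hsup : tsupport (φ : (Fin n → ℝ) → ℂ) ⊆ Ωi i,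
      T φ = Ti i ⟨φ, φ.2.1, φ.2.2.1, hsup⟩) ↔ T ∘ₗ sumLocal Ωi = DFinsupp.lsum ℂ Ti := by
  refine ⟨fun hT => DFinsupp.lhom_ext fun i ψ => ?_, fun hT i φ hsup => ?_⟩
  · rw [LinearMap.comp_apply, sumLocal_single, DFinsupp.lsum_single]
    exact hT i _ ψ.2.2.2
  · have := congr($hT (DFinsupp.single i ⟨φ, φ.2.1, φ.2.2.1, hsup⟩))
    rwa [LinearMap.comp_apply, sumLocal_single, DFinsupp.lsum_single] at this

end Dspace

theorem algebraicDual_gluing_general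
    {n : ℕ} {Ω : Set (Fin n → ℝ)}
    {ι : Type*} (Ωi : ι → Set (Fin n → ℝ))
    (hopen : ∀ i, IsOpen (Ωi i)) (hcover : Ω = ⋃ i, Ωi i)
    (Ti : ∀ i, Dspace n (Ωi i) →ₗ[ℂ] ℂ)
    (hcompat : ∀ i j, ∀ φ : (Fin n → ℝ) → ℂ,
      ∀ (h1 : ContDiff ℝ (⊤ : ℕ∞) φ) (h2 : HasCompactSupport φ)
        (hij : tsupport φ ⊆ Ωi i ∩ Ωi j),
      Ti i ⟨φ, mem_Dspace.mpr ⟨h1, h2, hij.trans Set.inter_subset_left⟩⟩ =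
      Ti j ⟨φ, mem_Dspace.mpr ⟨h1, h2, hij.trans Set.inter_subset_right⟩⟩) :
    ∃! T : Dspace n Ω →ₗ[ℂ] ℂ,
      ∀ i, ∀ φ : Dspace n Ω, ∀ hsup : tsupport (φ : (Fin n → ℝ) → ℂ) ⊆ Ωi i,
        T φ = Ti i ⟨(φ : (Fin n → ℝ) → ℂ),
          mem_Dspace.mpr ⟨(mem_Dspace.mp φ.2).1, (mem_Dspace.mp φ.2).2.1, hsup⟩⟩ := by
  classical
  subst hcover
  have hcompat' : ∀ i j (χ : Dspace n (Ωi i ∩ Ωi j)),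
      Ti i (Dspace.inclusion inter_subset_left χ) = Ti j (Dspace.inclusion inter_subset_right χ) :=
    fun i j χ =>
      have hχ := mem_Dspace.mp χ.2
      hcompat i j χ hχ.1 hχ.2.1 hχ.2.2
  refine (existsUnique_congr (Dspace.restricts_iff_comp_sumLocal Ωi Ti)).mpr ?_
  exact LinearMap.existsUnique_comp_eq_of_surjective (M := Π₀ i, Dspace n (Ωi i)) (P := ℂ)
    (Dspace.sumLocal_surjective Ωi hopen)
    (Dspace.ker_sumLocal_le_ker_lsum Ωi hopen Ti hcompat')

/-- Gluing: a compatible family of linear functionals `Tᵢ` on `D(Ωᵢ)` for an open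
cover `Ω = ⋃ Ωᵢ` glues to a unique linear functional `T` on `D(Ω)` restricting to
each `Tᵢ`. -/
theorem algebraicDual_gluing
    {n : ℕ} {Ω : Set (Fin n → ℝ)} (hΩ : IsOpen Ω)
    {ι : Type*} (Ωi : ι → Set (Fin n → ℝ))
    (hopen : ∀ i, IsOpen (Ωi i)) (hcover : Ω = ⋃ i, Ωi i)
    (Ti : ∀ i, Dspace n (Ωi i) →ₗ[ℂ] ℂ)
    (hcompat : ∀ i j, ∀ φ : (Fin n → ℝ) → ℂ,
      ∀ (h1 : ContDiff ℝ (⊤ : ℕ∞) φ) (h2 : HasCompactSupport φ)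
        (hij : tsupport φ ⊆ Ωi i ∩ Ωi j),
      Ti i ⟨φ, mem_Dspace.mpr ⟨h1, h2, hij.trans Set.inter_subset_left⟩⟩ =
      Ti j ⟨φ, mem_Dspace.mpr ⟨h1, h2, hij.trans Set.inter_subset_right⟩⟩) :
    ∃! T : Dspace n Ω →ₗ[ℂ] ℂ,
      ∀ i, ∀ φ : Dspace n Ω, ∀ hsup : tsupport (φ : (Fin n → ℝ) → ℂ) ⊆ Ωi i,
        T φ = Ti i ⟨(φ : (Fin n → ℝ) → ℂ),
          mem_Dspace.mpr ⟨(mem_Dspace.mp φ.2).1, (mem_Dspace.mp φ.2).2.1, hsup⟩⟩ :=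
  algebraicDual_gluing_general Ωi hopen hcover Ti hcompat
end

section
/- There exists a nonzero linear functional T on D(ℝ) such that T(φ) = 0 for every φ ∈ D(ℝ) with 0 ∉ tsupport φ (so the support of T is {0}), and yet T is not a finite linear combination of the Dirac measure at 0 and its derivatives: there do not exist m ∈ ℕ and coefficients a₀,…,a_m ∈ ℂ such that T(φ) = Σ_{k=0}^{m} a_k · φ^{(k)}(0) for all φ ∈ D(ℝ), where φ^{(k)} denotes the k-th iterated derivative. -/
/-!
Let `T φ = Λ (φ^(k)(0))ₖ`, where `Λ` is a linear functional on sequences that vanishes on the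
eventually zero ones but not on `(1, 1, 1, …)`; it exists by linear algebra. `T` only sees the
jet at `0`, so it is supported at `0`. Through a cutoff, every jet of an entire function at `0`
is the jet of a test function: `exp` gives `(1, 1, 1, …)`, so `T ≠ 0`, and the monomials
`xᵏ / k!` give the unit vectors, which `Λ` kills; testing a finite combination of `δ⁽ᵏ⁾`
against them shows that all its coefficients vanish.
-/

/-- `D(ℝ)`: the space of smooth compactly supported functions `ℝ → ℂ`,
as a submodule of `ℝ → ℂ`. -/
noncomputable def TestD : Submodule ℂ (ℝ → ℂ) where
  carrier := {φ | ContDiff ℝ (⊤ : ℕ∞) φ ∧ HasCompactSupport φ}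
  add_mem' hf hg := ⟨hf.1.add hg.1, hf.2.add hg.2⟩
  zero_mem' := ⟨contDiff_const, HasCompactSupport.zero⟩
  smul_mem' c f hf := ⟨hf.1.const_smul c,
    hf.2.mono (Function.support_const_smul_subset c f)⟩

open Filter Topology

section EventuallyZero

variable {K V : Type*}

variable (K) in
def eventuallyZero [Semiring K] : Submodule K (ℕ → K) where
  carrier := {s | ∀ᶠ k in atTop, s k = 0}
  add_mem' hs ht := by filter_upwards [hs, ht] with k hsk htk; simp [hsk, htk]
  zero_mem' := .of_forall fun _ ↦ rfl
  smul_mem' c s hs := by filter_upwards [hs] with k hsk; simp [hsk]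

lemma pi_single_mem_eventuallyZero [Semiring K] (k : ℕ) (c : K) :
    Pi.single k c ∈ eventuallyZero K := by
  filter_upwards [eventually_gt_atTop k] with j hj
  simp [hj.ne']

lemma one_notMem_eventuallyZero [Semiring K] [Nontrivial K] : (1 : ℕ → K) ∉ eventuallyZero K :=
  fun h ↦ one_ne_zero h.exists.choose_spec

lemma Module.Dual.apply_eq_zero_of_eq_sum_mul_apply [CommSemiring K] [AddCommMonoid V] [Module K V]
    {Λ : Module.Dual K (ℕ → K)} (hΛ : eventuallyZero K ≤ LinearMap.ker Λ)
    {J : V →ₗ[K] (ℕ → K)} (hJ : ∀ k, Pi.single k 1 ∈ LinearMap.range J)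
    {s : Finset ℕ} {a : ℕ → K} (h : ∀ v, Λ (J v) = ∑ k ∈ s, a k * J v k) (v : V) :
    Λ (J v) = 0 := by
  have ha : ∀ k ∈ s, a k = 0 := fun k hk ↦ by
    obtain ⟨w, hw⟩ := hJ k
    have := h w
    rw [hw, hΛ (pi_single_mem_eventuallyZero k 1)] at this
    simpa [Pi.single_apply, hk] using this.symm
  rw [h v, Finset.sum_eq_zero fun k hk ↦ by rw [ha k hk, zero_mul]]

end EventuallyZero

lemma iteratedDeriv_comp_ofReal {e : ℂ → ℂ} (he : Differentiable ℂ e) (n : ℕ) :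
    iteratedDeriv n (fun x : ℝ ↦ e x) = fun x : ℝ ↦ iteratedDeriv n e x := by
  induction n with
  | zero => simp
  | succ n ih =>
    ext x
    rw [iteratedDeriv_succ, ih, iteratedDeriv_succ]
    exact ((he.contDiff (n := ⊤)).differentiable_iteratedDeriv n (by simp)
      |>.differentiableAt.hasDerivAt.comp_ofReal).deriv

namespace TestD

lemma contDiffAt (φ : TestD) (n : ℕ) (x : ℝ) : ContDiffAt ℝ n (φ : ℝ → ℂ) x :=
  (φ.2.1.of_le (by exact_mod_cast le_top)).contDiffAt

noncomputable def jet : TestD →ₗ[ℂ] (ℕ → ℂ) where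
  toFun φ k := iteratedDeriv k (φ : ℝ → ℂ) 0
  map_add' φ ψ := funext fun k ↦ iteratedDeriv_add (contDiffAt φ k 0) (contDiffAt ψ k 0)
  map_smul' c φ := funext fun _ ↦ iteratedDeriv_const_smul_field c (φ : ℝ → ℂ)

lemma jet_apply (φ : TestD) (k : ℕ) : jet φ k = iteratedDeriv k (φ : ℝ → ℂ) 0 := rfl

lemma jet_eq_zero_of_notMem_tsupport {φ : TestD} (hφ : 0 ∉ tsupport (φ : ℝ → ℂ)) :
    jet φ = 0 := by
  ext k
  rw [jet_apply, (notMem_tsupport_iff_eventuallyEq.mp hφ).iteratedDeriv_eq]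
  simp

lemma exists_eventuallyEq {g : ℝ → ℂ} (hg : ContDiff ℝ (⊤ : ℕ∞) g) :
    ∃ φ : TestD, (φ : ℝ → ℂ) =ᶠ[𝓝 0] g := by
  let χ : ContDiffBump (0 : ℝ) := ⟨1, 2, one_pos, one_lt_two⟩
  refine ⟨⟨fun x ↦ g x * (χ x : ℂ), hg.mul (Complex.ofRealCLM.contDiff.comp χ.contDiff),
    (χ.hasCompactSupport.comp_left Complex.ofReal_zero).mul_left⟩, ?_⟩
  filter_upwards [χ.eventuallyEq_one] with x hx
  simp [hx]

lemma mem_range_jet {e : ℂ → ℂ} (he : Differentiable ℂ e) :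
    (fun k ↦ iteratedDeriv k e 0) ∈ LinearMap.range jet := by
  obtain ⟨φ, hφ⟩ := exists_eventuallyEq
    ((he.contDiff.restrict_scalars ℝ).comp Complex.ofRealCLM.contDiff)
  refine ⟨φ, funext fun k ↦ ?_⟩
  rw [jet_apply, hφ.iteratedDeriv_eq]
  exact congrFun (iteratedDeriv_comp_ofReal he k) 0

lemma pi_single_mem_range_jet (k : ℕ) : Pi.single k 1 ∈ LinearMap.range jet := by
  convert mem_range_jet (e := fun z ↦ z ^ k / k.factorial) (by fun_prop) using 1
  ext j
  rw [iteratedDeriv_div_const, iteratedDeriv_fun_pow_zero, Pi.single_apply]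
  split_ifs <;> simp [Nat.factorial_ne_zero]

lemma one_mem_range_jet : 1 ∈ LinearMap.range jet := by
  convert mem_range_jet Complex.differentiable_exp using 1
  ext k
  simpa using (congrFun (iteratedDeriv_cexp_const_mul k 1) 0).symm

end TestD

/-- There is a linear functional on `D(ℝ)` supported in `{0}` which is not a
finite linear combination of the Dirac measure at `0` and its derivatives. -/
theorem exists_functional_supported_at_zero_not_combination_of_dirac_derivatives :
    ∃ T : TestD →ₗ[ℂ] ℂ,
      T ≠ 0 ∧
      (∀ φ : TestD, 0 ∉ tsupport (φ : ℝ → ℂ) → T φ = 0) ∧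
      ¬ ∃ (m : ℕ) (a : ℕ → ℂ), ∀ φ : TestD,
          T φ = ∑ k ∈ Finset.range (m + 1), a k * iteratedDeriv k (φ : ℝ → ℂ) 0 := by
  obtain ⟨Λ, hΛ_one, hΛ⟩ := Submodule.exists_le_ker_of_notMem (one_notMem_eventuallyZero (K := ℂ))
  obtain ⟨φ₁, hφ₁⟩ := TestD.one_mem_range_jet
  refine ⟨Λ ∘ₗ TestD.jet, fun h ↦ hΛ_one ?_, fun φ hφ ↦ ?_, ?_⟩
  · simpa [hφ₁] using LinearMap.congr_fun h φ₁
  · simp [TestD.jet_eq_zero_of_notMem_tsupport hφ]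
  · rintro ⟨m, a, ha⟩
    apply hΛ_one
    rw [← hφ₁]
    exact Module.Dual.apply_eq_zero_of_eq_sum_mul_apply hΛ TestD.pi_single_mem_range_jet ha φ₁
end

section
/- There exist a linear functional S on D(ℝ) and a nonzero φ ∈ D(ℝ) such that: (a) the set { x ∈ ℝ : S(y ↦ φ(x − y)) ≠ 0 } is countable, so the pointwise convolution function x ↦ (S∗φ)(x) = S(y ↦ φ(x − y)) vanishes Lebesgue-almost everywhere; and yet (b) S(φ̌ ⋆ φ) = 1, where φ̌ ⋆ φ is the ordinary convolution of functions, (φ̌ ⋆ φ)(x) = ∫_ℝ φ(y − x)·φ(y) dy, which is a smooth compactly supported function and hence an element of D(ℝ). -/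
open MeasureTheory

lemma transReflect_mem (φ : TestD) (x : ℝ) :
    (fun y : ℝ => (φ : ℝ → ℂ) (x - y)) ∈ TestD :=
  ⟨φ.2.1.comp (contDiff_const.sub contDiff_id),
    φ.2.2.comp_homeomorph (Homeomorph.subLeft x)⟩

open Filter Topology

theorem LinearIndependent.exists_linearMap_eq_one_subsingleton
    {K V ι : Type*} [Field K] [AddCommGroup V] [Module K V] {v : ι → V}
    (hv : LinearIndependent K v) {w : V} (hw : w ≠ 0) :
    ∃ f : V →ₗ[K] K, f w = 1 ∧ {i | f (v i) ≠ 0}.Subsingleton := by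
  classical
  let B := Module.Basis.extend hv.linearIndepOn_id
  obtain ⟨j, hj⟩ : ∃ j, B.repr w j ≠ 0 := by
    by_contra! h
    exact hw (B.repr.map_eq_zero_iff.1 (Finsupp.ext h))
  refine ⟨(B.repr w j)⁻¹ • B.coord j, inv_mul_cancel₀ hj, ?_⟩
  suffices hj_eq : ∀ i, (B.repr w j)⁻¹ • B.coord j (v i) ≠ 0 → (j : V) = v i from
    fun i hi i' hi' => hv.injective ((hj_eq i hi).symm.trans (hj_eq i' hi'))
  intro i hi
  have hvi : B ⟨v i, hv.linearIndepOn_id.subset_extend _ ⟨i, rfl⟩⟩ = v i :=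
    Module.Basis.extend_apply_self _ _
  rw [← hvi, Module.Basis.coord_apply, Module.Basis.repr_self] at hi
  obtain ⟨rfl, -⟩ := Finsupp.single_apply_ne_zero.1 (right_ne_zero_of_smul hi)
  rfl

theorem linearIndependent_sub_apply_of_frequently {K : Type*} [Field K] {φ : ℝ → K}
    (hφ_nonpos : ∀ t ≤ 0, φ t = 0) (hφ_right : ∃ᶠ t in 𝓝[>] 0, φ t ≠ 0) :
    LinearIndependent K (fun x y => φ (x - y)) := by
  classical
  rw [linearIndependent_iff']
  intro s
  induction s using Finset.induction_on_max with
  | empty => simp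
  | insert a s hlt ih =>
    intro c hsum
    have ha : a ∉ s := fun h => lt_irrefl a (hlt a h)
    have hsmall : ∀ᶠ t in 𝓝[>] (0 : ℝ), ∀ b ∈ s, t ≤ a - b :=
      (s.eventually_all).2 fun b hb =>
        (eventually_le_nhds (sub_pos.2 (hlt b hb))).filter_mono nhdsWithin_le_nhds
    obtain ⟨t, hφt, ht⟩ := (hφ_right.and_eventually hsmall).exists
    -- at `a - t` every translate `b ∈ s` vanishes, leaving only `c a * φ t`
    have hca : c a = 0 := by
      have h := congrFun hsum (a - t)
      simp only [Finset.sum_apply, Pi.smul_apply, smul_eq_mul, Pi.zero_apply,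
        Finset.sum_insert ha, sub_sub_cancel] at h
      rw [Finset.sum_eq_zero fun b hb => by rw [hφ_nonpos _ (by linarith [ht b hb]), mul_zero],
        add_zero] at h
      exact (mul_eq_zero.1 h).resolve_right hφt
    rw [Finset.sum_insert ha, hca, zero_smul, zero_add] at hsum
    intro i hi
    rcases Finset.mem_insert.1 hi with rfl | hi
    · exact hca
    · exact ih c hsum i hi

open Convolution

theorem integral_sub_mul_mem_testD (f g : TestD) :
    (fun x => ∫ y : ℝ, (f : ℝ → ℂ) (y - x) * (g : ℝ → ℂ) y) ∈ TestD := by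
  have hf_refl : HasCompactSupport fun t => (f : ℝ → ℂ) (-t) :=
    f.2.2.comp_homeomorph (Homeomorph.neg ℝ)
  have h_conv : (fun x => ∫ y : ℝ, (f : ℝ → ℂ) (y - x) * (g : ℝ → ℂ) y) =
      (fun t => (f : ℝ → ℂ) (-t)) ⋆[ContinuousLinearMap.mul ℝ ℂ] (g : ℝ → ℂ) := by
    funext x
    rw [convolution_def, ← integral_sub_left_eq_self _ volume x]
    simp only [ContinuousLinearMap.mul_apply', sub_sub_cancel_left]
  rw [h_conv]
  exact ⟨hf_refl.contDiff_convolution_left _ (f.2.1.comp contDiff_neg)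
    g.2.1.continuous.locallyIntegrable, hf_refl.convolution _ g.2.2⟩

noncomputable def bump : ContDiffBump (1 : ℝ) where
  rIn := 1 / 2
  rOut := 1
  rIn_pos := by norm_num
  rIn_lt_rOut := by norm_num

theorem bump_eq_zero_of_nonpos {t : ℝ} (ht : t ≤ 0) : bump t = 0 :=
  bump.zero_of_le_dist <| by
    rw [Real.dist_eq, abs_of_nonpos (by linarith)]
    change 1 ≤ -(t - 1)
    linarith

theorem frequently_bump_ne_zero : ∃ᶠ t in 𝓝[>] (0 : ℝ), bump t ≠ 0 := by
  refine (Filter.eventually_of_mem (Ioo_mem_nhdsGT (by norm_num : (0 : ℝ) < 2)) ?_).frequently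
  intro t ht
  refine (bump.pos_of_mem_ball ?_).ne'
  rw [Metric.mem_ball, Real.dist_eq, abs_sub_lt_iff]
  change t - 1 < 1 ∧ 1 - t < 1
  constructor <;> linarith [ht.1, ht.2]

theorem bump_one : bump 1 = 1 :=
  bump.one_of_mem_closedBall (Metric.mem_closedBall_self bump.rIn_pos.le)

theorem integral_bump_sq_pos : 0 < ∫ y : ℝ, bump y ^ 2 :=
  (bump.continuous.pow 2).integral_pos_of_hasCompactSupport_nonneg_nonzero
    (bump.hasCompactSupport.comp_left (zero_pow two_ne_zero)) (fun _ => sq_nonneg _)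
    (x := 1) (by rw [bump_one]; norm_num)

noncomputable def bumpTest : TestD :=
  ⟨fun t => (bump t : ℂ), Complex.ofRealCLM.contDiff.comp bump.contDiff,
    bump.hasCompactSupport.comp_left Complex.ofReal_zero⟩

noncomputable def bumpAutocorrelation : TestD :=
  ⟨_, integral_sub_mul_mem_testD bumpTest bumpTest⟩

theorem bumpAutocorrelation_ne_zero : bumpAutocorrelation ≠ 0 := by
  intro h
  have h0 : (bumpAutocorrelation : ℝ → ℂ) 0 = 0 := by rw [h]; rfl
  have h_sq : (bumpAutocorrelation : ℝ → ℂ) 0 = ((∫ y : ℝ, bump y ^ 2 : ℝ) : ℂ) := by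
    rw [← integral_complex_ofReal]
    simp [bumpAutocorrelation, bumpTest, sq]
  rw [h_sq, Complex.ofReal_eq_zero] at h0
  exact integral_bump_sq_pos.ne' h0

/-- Inconsistency of the two definitions of convolution in the algebraic dual:
there are `S ∈ D*(ℝ)` and `0 ≠ φ ∈ D(ℝ)` such that the pointwise convolution
`x ↦ (S∗φ)(x) = S(y ↦ φ(x−y))` is nonzero only on a countable set (hence is
zero almost everywhere), while `S(φ̌ ⋆ φ) = 1`, where
`(φ̌ ⋆ φ)(x) = ∫ φ(y−x)·φ(y) dy ∈ D(ℝ)`. -/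
theorem convolution_definitions_inconsistent :
    ∃ (S : TestD →ₗ[ℂ] ℂ) (φ : TestD), (φ : ℝ → ℂ) ≠ 0 ∧
      Set.Countable
        {x : ℝ | S ⟨fun y : ℝ => (φ : ℝ → ℂ) (x - y), transReflect_mem φ x⟩ ≠ 0} ∧
      (∀ᵐ x : ℝ,
        S ⟨fun y : ℝ => (φ : ℝ → ℂ) (x - y), transReflect_mem φ x⟩ = 0) ∧
      ∃ ψ : TestD,
        (∀ x : ℝ, (ψ : ℝ → ℂ) x = ∫ y : ℝ, (φ : ℝ → ℂ) (y - x) * (φ : ℝ → ℂ) y) ∧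
        S ψ = 1 := by
  have h_indep_fun : LinearIndependent ℂ fun x y => (bumpTest : ℝ → ℂ) (x - y) :=
    linearIndependent_sub_apply_of_frequently
      (fun t ht => by simp [bumpTest, bump_eq_zero_of_nonpos ht])
      (frequently_bump_ne_zero.mono fun t ht => by simpa [bumpTest] using ht)
  have h_indep : LinearIndependent ℂ fun x => (⟨_, transReflect_mem bumpTest x⟩ : TestD) :=
    LinearIndependent.of_comp TestD.subtype h_indep_fun
  obtain ⟨S, hSψ, hS⟩ := h_indep.exists_linearMap_eq_one_subsingleton bumpAutocorrelation_ne_zero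
  refine ⟨S, bumpTest, ?_, hS.countable, ?_, bumpAutocorrelation, fun _ => rfl, hSψ⟩
  · intro h
    simpa [bumpTest, bump_one] using congrFun h 1
  · exact (hS.countable.ae_notMem volume).mono fun x hx => not_not.1 hx
end

section
/- Let n ≥ 1 and let a : (Fin n → ℕ) → ℂ be a finitely supported coefficient function that is not identically zero (defining the nonzero constant-coefficient linear partial differential operator P(∂) = Σ_p a_p ∂^p). If φ : ℝⁿ → ℂ is an infinitely differentiable function with compact support such that Σ_p a_p (∂^p φ)(x) = 0 for all x ∈ ℝⁿ, then φ = 0. In particular, for every open Ω ⊆ ℝⁿ, the operator P(∂) (and likewise its transpose) is injective on D(Ω). -/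
/-- Partial derivative in the `j`-th coordinate direction:
`(pd j ψ) x = fderiv ℝ ψ x (Pi.single j 1)`. -/
noncomputable def pd {n : ℕ} (j : Fin n) (ψ : (Fin n → ℝ) → ℂ) :
    (Fin n → ℝ) → ℂ :=
  fun x => fderiv ℝ ψ x (Pi.single j 1)

/-- Iterated partial derivative `∂^p` for a multi-index `p : Fin n → ℕ`:
apply, for each `j`, the `j`-th partial derivative `p j` times. -/
noncomputable def multiPD {n : ℕ} (p : Fin n → ℕ) (ψ : (Fin n → ℝ) → ℂ) :
    (Fin n → ℝ) → ℂ :=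
  (List.finRange n).foldr (fun j f => (pd j)^[p j] ∘ f) id ψ

/-!
Take Fourier transforms: `∂_j` becomes multiplication by `2πiξ_j`, so `P(∂)φ = 0` gives
`P(2πiξ) φ̂(ξ) = 0` for every `ξ`. Since `φ̂` is continuous, if it were nonzero somewhere it would be
nonzero on a box, so the polynomial `P(2πi ·)` would vanish on a product of infinite sets and hence
be the zero polynomial, contradicting `a ≠ 0`. Thus `φ̂ = 0`, and Fourier inversion gives `φ = 0`.
-/

open MeasureTheory Set
open scoped FourierTransform Real Topology ContDiff RealInnerProductSpace

def IsTestFunction {E : Type*} [NormedAddCommGroup E] [NormedSpace ℝ E] (g : E → ℂ) : Prop :=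
  ContDiff ℝ ∞ g ∧ HasCompactSupport g

namespace IsTestFunction

variable {E : Type*} [NormedAddCommGroup E] [NormedSpace ℝ E] {g : E → ℂ}

lemma integrable [MeasurableSpace E] [BorelSpace E] {μ : Measure E} [IsFiniteMeasureOnCompacts μ]
    (hg : IsTestFunction g) : Integrable g μ :=
  hg.1.continuous.integrable_of_hasCompactSupport hg.2

lemma fderiv_apply (hg : IsTestFunction g) (v : E) : IsTestFunction (fun x => fderiv ℝ g x v) :=
  ⟨(hg.1.fderiv_right (by simp)).clm_apply contDiff_const, hg.2.fderiv_apply ℝ v⟩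

lemma comp_continuousLinearEquiv {F : Type*} [NormedAddCommGroup F] [NormedSpace ℝ F]
    (hg : IsTestFunction g) (e : F ≃L[ℝ] E) : IsTestFunction (g ∘ e) :=
  ⟨hg.1.comp e.contDiff, hg.2.comp_homeomorph e.toHomeomorph⟩

end IsTestFunction

section Fourier

variable {V : Type*} [NormedAddCommGroup V] [InnerProductSpace ℝ V] [FiniteDimensional ℝ V]
  [MeasurableSpace V] [BorelSpace V] {g : V → ℂ}

lemma IsTestFunction.fourier_fderiv_apply (hg : IsTestFunction g) (v ξ : V) :
    𝓕 (fun x => fderiv ℝ g x v) ξ = 2 * π * Complex.I * ⟪ξ, v⟫ * 𝓕 g ξ := by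
  have hg' : Integrable (fderiv ℝ g) :=
    (hg.1.continuous_fderiv (by simp)).integrable_of_hasCompactSupport (hg.2.fderiv ℝ)
  rw [← Real.fourier_continuousLinearMap_apply hg',
    Real.fourier_fderiv hg.integrable (hg.1.differentiable (by simp)) hg']
  simp only [VectorFourier.fourierSMulRight_apply, neg_apply, innerSL_apply_apply ℝ, neg_smul,
    Complex.real_smul, smul_eq_mul, mul_neg, neg_mul, neg_neg]
  ring

lemma IsTestFunction.eq_zero_of_fourier_eq_zero (hg : IsTestFunction g) (h : 𝓕 g = 0) :
    g = 0 := by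
  rw [← hg.1.continuous.fourierInv_fourier_eq hg.integrable (h ▸ integrable_zero _ _ _), h]
  ext w
  simp [Real.fourierInv_eq]

lemma fourier_finsetSum_mul {ι : Type*} (s : Finset ι) (c : ι → ℂ) {f : ι → V → ℂ}
    (hf : ∀ i ∈ s, Integrable (f i)) (ξ : V) :
    𝓕 (fun x => ∑ i ∈ s, c i * f i x) ξ = ∑ i ∈ s, c i * 𝓕 (f i) ξ := by
  have hint (i) (hi : i ∈ s) : Integrable (fun v => c i * 𝐞 (-⟪v, ξ⟫) • f i v) :=
    ((Real.fourierIntegral_convergent_iff ξ).2 (hf i hi)).const_mul (c i)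
  simp only [Real.fourier_eq, ← integral_const_mul]
  rw [← integral_finsetSum s hint]
  simp only [Finset.smul_sum, mul_smul_comm]

end Fourier

/-- The Fourier transform `ĝ(ξ) = ∫ e^{-2πi x·ξ} g(x) dx` on `ι → ℝ`, computed by transport to
`EuclideanSpace ℝ ι`: the sup norm of `ι → ℝ` does not come from an inner product. -/
noncomputable def fourierPi {ι : Type*} [Fintype ι] (g : (ι → ℝ) → ℂ) (ξ : ι → ℝ) : ℂ :=
  𝓕 (g ∘ EuclideanSpace.equiv ι ℝ) ((EuclideanSpace.equiv ι ℝ).symm ξ)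

section FourierPi

variable {ι : Type*} [Fintype ι] {g : (ι → ℝ) → ℂ}

lemma IsTestFunction.continuous_fourierPi (hg : IsTestFunction g) : Continuous (fourierPi g) :=
  (VectorFourier.fourierIntegral_continuous Real.continuous_fourierChar continuous_inner
    (hg.comp_continuousLinearEquiv _).integrable).comp (EuclideanSpace.equiv ι ℝ).symm.continuous

lemma IsTestFunction.eq_zero_of_fourierPi_eq_zero (hg : IsTestFunction g)
    (h : fourierPi g = 0) : g = 0 := by
  have hfourier : 𝓕 (g ∘ EuclideanSpace.equiv ι ℝ) = 0 := by
    ext ξ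
    simpa [fourierPi] using congr_fun h (EuclideanSpace.equiv ι ℝ ξ)
  ext x
  simpa only [Function.comp_apply, ContinuousLinearEquiv.apply_symm_apply, Pi.zero_apply] using
    congr_fun ((hg.comp_continuousLinearEquiv _).eq_zero_of_fourier_eq_zero hfourier)
      ((EuclideanSpace.equiv ι ℝ).symm x)

lemma fourierPi_finsetSum_mul {κ : Type*} (s : Finset κ) (c : κ → ℂ) {f : κ → (ι → ℝ) → ℂ}
    (hf : ∀ i ∈ s, IsTestFunction (f i)) (ξ : ι → ℝ) :
    fourierPi (fun x => ∑ i ∈ s, c i * f i x) ξ = ∑ i ∈ s, c i * fourierPi (f i) ξ :=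
  fourier_finsetSum_mul s c (fun i hi => ((hf i hi).comp_continuousLinearEquiv _).integrable) _

end FourierPi

section PartialDerivatives

variable {n : ℕ} {g : (Fin n → ℝ) → ℂ}

lemma pd_comp_euclideanSpace_equiv (j : Fin n) :
    pd j g ∘ EuclideanSpace.equiv (Fin n) ℝ
      = fun x => fderiv ℝ (g ∘ EuclideanSpace.equiv (Fin n) ℝ) x (EuclideanSpace.single j 1) := by
  ext x
  simp only [Function.comp_apply, pd, (EuclideanSpace.equiv (Fin n) ℝ).comp_right_fderiv,
    ContinuousLinearMap.comp_apply, ContinuousLinearEquiv.coe_coe]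
  rfl

lemma IsTestFunction.pd (hg : IsTestFunction g) (j : Fin n) : IsTestFunction (pd j g) :=
  hg.fderiv_apply _

lemma IsTestFunction.iterate_pd (hg : IsTestFunction g) (j : Fin n) (k : ℕ) :
    IsTestFunction ((_root_.pd j)^[k] g) :=
  Function.Iterate.rec IsTestFunction hg (fun _ h => h.pd j) k

lemma IsTestFunction.foldr_iterate_pd (hg : IsTestFunction g) (p : Fin n → ℕ) (l : List (Fin n)) :
    IsTestFunction (l.foldr (fun j f => (_root_.pd j)^[p j] ∘ f) id g) := by
  induction l with
  | nil => exact hg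
  | cons j l ih => exact ih.iterate_pd j (p j)

lemma IsTestFunction.multiPD (hg : IsTestFunction g) (p : Fin n → ℕ) :
    IsTestFunction (_root_.multiPD p g) :=
  hg.foldr_iterate_pd p _

lemma fourierPi_pd (hg : IsTestFunction g) (j : Fin n) (ξ : Fin n → ℝ) :
    fourierPi (pd j g) ξ = 2 * π * Complex.I * ξ j * fourierPi g ξ := by
  rw [fourierPi, pd_comp_euclideanSpace_equiv,
    (hg.comp_continuousLinearEquiv _).fourier_fderiv_apply, EuclideanSpace.inner_single_right]
  simp [fourierPi]

lemma fourierPi_iterate_pd (hg : IsTestFunction g) (j : Fin n) (k : ℕ) (ξ : Fin n → ℝ) :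
    fourierPi ((pd j)^[k] g) ξ = (2 * π * Complex.I * ξ j) ^ k * fourierPi g ξ := by
  induction k with
  | zero => simp
  | succ k ih =>
    rw [Function.iterate_succ_apply', fourierPi_pd (hg.iterate_pd j k), ih]
    ring

lemma fourierPi_foldr_iterate_pd (hg : IsTestFunction g) (p : Fin n → ℕ) (l : List (Fin n))
    (ξ : Fin n → ℝ) :
    fourierPi (l.foldr (fun j f => (pd j)^[p j] ∘ f) id g) ξ
      = (l.map fun j => (2 * π * Complex.I * ξ j) ^ p j).prod * fourierPi g ξ := by
  induction l with
  | nil => simp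
  | cons j l ih =>
    rw [List.foldr_cons, Function.comp_apply, List.map_cons, List.prod_cons,
      fourierPi_iterate_pd (hg.foldr_iterate_pd p l), ih]
    ring

lemma fourierPi_multiPD (hg : IsTestFunction g) (p : Fin n → ℕ) (ξ : Fin n → ℝ) :
    fourierPi (multiPD p g) ξ = (∏ j, (2 * π * Complex.I * ξ j) ^ p j) * fourierPi g ξ := by
  rw [Fin.prod_univ_def]
  exact fourierPi_foldr_iterate_pd hg p _ ξ

end PartialDerivatives

namespace MvPolynomial

variable {σ R : Type*} [Fintype σ] [CommSemiring R]

noncomputable def ofFunFinsupp (a : (σ → ℕ) →₀ R) : MvPolynomial σ R :=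
  ∑ p ∈ a.support, monomial (Finsupp.equivFunOnFinite.symm p) (a p)

lemma coeff_ofFunFinsupp (a : (σ → ℕ) →₀ R) (m : σ →₀ ℕ) : coeff m (ofFunFinsupp a) = a m := by
  classical
  simp only [ofFunFinsupp, coeff_sum, coeff_monomial, Equiv.symm_apply_eq, Finset.sum_ite_eq',
    Finsupp.mem_support_iff, ne_eq, ite_not]
  exact ite_eq_right_iff.2 fun h => h.symm

lemma ofFunFinsupp_eq_zero_iff {a : (σ → ℕ) →₀ R} : ofFunFinsupp a = 0 ↔ a = 0 := by
  refine ⟨fun h => Finsupp.ext fun p => ?_, fun h => by simp [h, ofFunFinsupp]⟩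
  simpa [coeff_ofFunFinsupp] using congr_arg (coeff (Finsupp.equivFunOnFinite.symm p)) h

lemma eval_ofFunFinsupp (a : (σ → ℕ) →₀ R) (x : σ → R) :
    eval x (ofFunFinsupp a) = ∑ p ∈ a.support, a p * ∏ i, x i ^ p i := by
  simp only [ofFunFinsupp, map_sum, eval_monomial, Finsupp.prod_fintype, pow_zero, implies_true,
    Finsupp.equivFunOnFinite_symm_apply_apply]

lemma eq_zero_of_eventually_eval_const_mul_eq_zero {P : MvPolynomial σ ℂ} {c : ℂ} (hc : c ≠ 0)
    {η₀ : σ → ℝ} (h : ∀ᶠ η in 𝓝 η₀, eval (fun i => c * η i) P = 0) : P = 0 := by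
  obtain ⟨ε, hε, hball⟩ := Metric.eventually_nhds_iff_ball.1 h
  have hinj : Function.Injective fun t : ℝ => c * t := fun s t hst =>
    Complex.ofReal_injective (mul_left_cancel₀ hc hst)
  -- a sup-norm ball is a box whose sides are infinite
  refine funext_set (fun i => (fun t : ℝ => c * t) '' Metric.ball (η₀ i) ε)
    (fun i => ?_) (fun x hx => ?_)
  · rw [Real.ball_eq_Ioo]
    exact (Ioo_infinite (by linarith)).image hinj.injOn
  · choose η hη hηx using fun i => hx i (mem_univ i)
    have hη_mem : η ∈ Metric.ball η₀ ε := by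
      rw [ball_pi _ hε]
      exact fun i _ => hη i
    rw [map_zero, ← hball η hη_mem, ← _root_.funext hηx]

end MvPolynomial

open MvPolynomial in
lemma fourierPi_sum_mul_multiPD {n : ℕ} (a : (Fin n → ℕ) →₀ ℂ) {g : (Fin n → ℝ) → ℂ}
    (hg : IsTestFunction g) (ξ : Fin n → ℝ) :
    fourierPi (fun x => ∑ p ∈ a.support, a p * multiPD p g x) ξ
      = eval (fun j => 2 * π * Complex.I * ξ j) (ofFunFinsupp a) * fourierPi g ξ := by
  rw [fourierPi_finsetSum_mul _ _ (fun p _ => hg.multiPD p), eval_ofFunFinsupp, Finset.sum_mul]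
  simp only [fourierPi_multiPD hg, mul_assoc]

theorem constCoeff_PDO_injective_on_testFunctions_general
    (n : ℕ) (a : (Fin n → ℕ) →₀ ℂ) (ha : a ≠ 0)
    (φ : (Fin n → ℝ) → ℂ) (hφ1 : ContDiff ℝ (⊤ : ℕ∞) φ)
    (hφ2 : HasCompactSupport φ)
    (hP : ∀ x : Fin n → ℝ, ∑ p ∈ a.support, a p * multiPD p φ x = 0) :
    φ = 0 := by
  have hφ : IsTestFunction φ := ⟨hφ1, hφ2⟩
  have hsymbol (ξ : Fin n → ℝ) :
      MvPolynomial.eval (fun j => 2 * π * Complex.I * ξ j) (MvPolynomial.ofFunFinsupp a)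
        * fourierPi φ ξ = 0 := by
    rw [← fourierPi_sum_mul_multiPD a hφ, funext hP]
    simp [fourierPi, Real.fourier_eq]
  suffices ∀ ξ₀, fourierPi φ ξ₀ = 0 from hφ.eq_zero_of_fourierPi_eq_zero (funext this)
  intro ξ₀
  by_contra hξ₀
  have hnear : ∀ᶠ ξ in 𝓝 ξ₀,
      MvPolynomial.eval (fun j => 2 * π * Complex.I * ξ j) (MvPolynomial.ofFunFinsupp a) = 0 := by
    filter_upwards [hφ.continuous_fourierPi.continuousAt.eventually_ne hξ₀] with ξ hξ
    exact (mul_eq_zero.1 (hsymbol ξ)).resolve_right hξ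
  exact ha (MvPolynomial.ofFunFinsupp_eq_zero_iff.1
    (MvPolynomial.eq_zero_of_eventually_eval_const_mul_eq_zero (by simp) hnear))

/-- A nonzero constant-coefficient linear partial differential operator
`P(∂) = Σ_p a_p ∂^p` is injective on smooth compactly supported functions:
if `P(∂)φ = 0` everywhere then `φ = 0`. -/
theorem constCoeff_PDO_injective_on_testFunctions
    (n : ℕ) (hn : 1 ≤ n) (a : (Fin n → ℕ) →₀ ℂ) (ha : a ≠ 0)
    (φ : (Fin n → ℝ) → ℂ) (hφ1 : ContDiff ℝ (⊤ : ℕ∞) φ)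
    (hφ2 : HasCompactSupport φ)
    (hP : ∀ x : Fin n → ℝ, ∑ p ∈ a.support, a p * multiPD p φ x = 0) :
    φ = 0 :=
  constCoeff_PDO_injective_on_testFunctions_general n a ha φ hφ1 hφ2 hP
end

section
/- Let Ω ⊆ ℝ³ be open, with coordinates written (x₁, y₁, x₂). If φ : ℝ³ → ℂ is an infinitely differentiable function with compact support contained in Ω that satisfies the (transposed) Lewy equation −(∂φ/∂x₁)(x) − i·(∂φ/∂y₁)(x) + 2i·(x₁ + i·y₁)·(∂φ/∂x₂)(x) = 0 for all x = (x₁, y₁, x₂) ∈ ℝ³, then φ = 0. That is, the Lewy operator P(x,∂) = −∂/∂x₁ − i ∂/∂y₁ + 2i(x₁ + i y₁) ∂/∂x₂ is injective on D(Ω). -/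
open Complex

open MeasureTheory Real FourierTransform Set Topology

/-!
Write a point of `ℝ³` as `(z, t)` with `z = x₁ + i y₁` and `t = x₂`, and let `H_ξ(z)` be the
Fourier transform of `t ↦ φ(z, t)` at `ξ`. The Fourier transform turns `∂/∂t` into `2πiξ`, so the
Lewy equation becomes `∂H_ξ/∂z̄ = -2πξ z H_ξ`, and `exp(2πξ|z|²) H_ξ` is an entire function.
It vanishes for large `|z|` since `φ` has compact support, hence everywhere by the identity
theorem, and Fourier inversion in `t` gives `φ = 0`.
-/

theorem HasCompactSupport.comp_prodMk {α β γ : Type*} [TopologicalSpace α] [TopologicalSpace β]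
    [T2Space β] [Zero γ] {g : α × β → γ} (hg : HasCompactSupport g) (a : α) :
    HasCompactSupport fun b => g (a, b) :=
  .intro (hg.image continuous_snd) fun _ hb =>
    image_eq_zero_of_notMem_tsupport fun h => hb ⟨_, h, rfl⟩

theorem Continuous.integrable_comp_prodMk {E G : Type*} [TopologicalSpace E]
    [NormedAddCommGroup G] {g : E × ℝ → G} (hg : Continuous g) (hs : HasCompactSupport g)
    (z : E) : Integrable fun t => g (z, t) :=
  (hg.comp (Continuous.prodMk_right z)).integrable_of_hasCompactSupport (hs.comp_prodMk z)

section FourierSnd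

variable {E F : Type*} [NormedAddCommGroup F] [NormedSpace ℂ F]

noncomputable def fourierSnd (Ψ : E × ℝ → F) (ξ : ℝ) (z : E) : F :=
  𝓕 (fun t => Ψ (z, t)) ξ

variable {Ψ : E × ℝ → F}

theorem fourierSnd_add {f g : E × ℝ → F} {z : E} (hf : Integrable fun t => f (z, t))
    (hg : Integrable fun t => g (z, t)) (ξ : ℝ) :
    fourierSnd (f + g) ξ z = fourierSnd f ξ z + fourierSnd g ξ z :=
  congrFun (VectorFourier.fourierIntegral_add Real.continuous_fourierChar
    (innerSL ℝ).continuous₂ hf hg) ξ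

theorem fourierSnd_smul_fst (c : E → ℂ) (f : E × ℝ → F) (ξ : ℝ) (z : E) :
    fourierSnd (fun p => c p.1 • f p) ξ z = c z • fourierSnd f ξ z :=
  congrFun (VectorFourier.fourierIntegral_const_smul _ _ _ (fun t => f (z, t)) (c z)) ξ

variable [NormedAddCommGroup E]

theorem HasCompactSupport.exists_fourierSnd_eq_zero (hs : HasCompactSupport Ψ) :
    ∃ R, ∀ ξ z, R < ‖z‖ → fourierSnd Ψ ξ z = 0 := by
  obtain ⟨R, hR⟩ := hs.isBounded.subset_closedBall 0
  refine ⟨R, fun ξ z hz => ?_⟩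
  have hslice : (fun t => Ψ (z, t)) = 0 := funext fun t =>
    image_eq_zero_of_notMem_tsupport fun h => by
      have := mem_closedBall_zero_iff.1 (hR h)
      rw [Prod.norm_def] at this
      exact (hz.trans_le (le_max_left _ _)).not_ge this
  simp [fourierSnd, hslice, fourier_real_eq]

variable [NormedSpace ℝ E]

theorem hasFDerivAt_fourierSnd (hΨ : ContDiff ℝ 1 Ψ) (hs : HasCompactSupport Ψ) (ξ : ℝ)
    (z : E) :
    HasFDerivAt (fourierSnd Ψ ξ) (𝓕 (fun t => fderiv ℝ Ψ (z, t) ∘L .inl ℝ E ℝ) ξ) z := by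
  have hΨ' : Continuous (fderiv ℝ Ψ) := hΨ.continuous_fderiv one_ne_zero
  obtain ⟨C, hC⟩ := (hs.fderiv ℝ).exists_bound_of_continuous hΨ'
  set K := Prod.snd '' tsupport Ψ
  have hK : IsCompact K := hs.image continuous_snd
  have hvanish : ∀ w, ∀ t ∉ K, fderiv ℝ Ψ (w, t) = 0 := fun w t ht =>
    Function.notMem_support.1 fun h => ht ⟨_, support_fderiv_subset ℝ h, rfl⟩
  have hcont : ∀ w, Continuous fun t => 𝐞 (-(t * ξ)) • Ψ (w, t) := fun w =>
    ((Real.continuous_fourierChar.comp (by fun_prop)).smul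
      (hΨ.continuous.comp (Continuous.prodMk_right w)))
  unfold fourierSnd
  simp_rw [fourier_real_eq]
  refine hasFDerivAt_integral_of_dominated_of_fderiv_le (s := univ) Filter.univ_mem
    (F' := fun w t => 𝐞 (-(t * ξ)) • (fderiv ℝ Ψ (w, t) ∘L .inl ℝ E ℝ))
    (bound := K.indicator fun _ => C) ?_ ?_ ?_ ?_ ?_ ?_
  · exact Filter.Eventually.of_forall fun w => (hcont w).aestronglyMeasurable
  · exact (hcont z).integrable_of_hasCompactSupport ((hs.comp_prodMk z).smul_left)
  · exact ((Real.continuous_fourierChar.comp (by fun_prop)).smul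
      ((hΨ'.comp (Continuous.prodMk_right z)).clm_comp continuous_const)).aestronglyMeasurable
  · refine Filter.Eventually.of_forall fun t w _ => ?_
    by_cases ht : t ∈ K
    · rw [indicator_of_mem ht, Circle.smul_def, norm_smul, Circle.norm_coe, one_mul]
      exact (ContinuousLinearMap.opNorm_comp_le _ _).trans
        (mul_le_of_le_one_right (norm_nonneg _) (ContinuousLinearMap.norm_inl_le_one ℝ E ℝ))
        |>.trans (hC _)
    · rw [indicator_of_notMem ht, hvanish w t ht]
      simp
  · exact (integrable_indicator_iff hK.measurableSet).2 (integrableOn_const hK.measure_lt_top.ne)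
  · refine Filter.Eventually.of_forall fun t w _ => ?_
    exact (((hΨ.differentiable one_ne_zero) (w, t)).hasFDerivAt.comp w
      (hasFDerivAt_prodMk_left w t)).const_smul _

theorem ContDiff.integrable_fderiv_apply_prodMk (hΨ : ContDiff ℝ 1 Ψ)
    (hs : HasCompactSupport Ψ) (v : E × ℝ) (z : E) :
    Integrable fun t => fderiv ℝ Ψ (z, t) v :=
  ((hΨ.continuous_fderiv one_ne_zero).clm_apply continuous_const).integrable_comp_prodMk
    ((hs.fderiv ℝ).comp_left (g := fun L => L v) (zero_apply v)) z

theorem fourier_fderiv_comp_inl_apply (hΨ : ContDiff ℝ 1 Ψ) (hs : HasCompactSupport Ψ) (ξ : ℝ)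
    (z w : E) :
    𝓕 (fun t => fderiv ℝ Ψ (z, t) ∘L .inl ℝ E ℝ) ξ w =
      fourierSnd (fun p => fderiv ℝ Ψ p (w, 0)) ξ z :=
  fourier_continuousLinearMap_apply <|
    ((hΨ.continuous_fderiv one_ne_zero).clm_comp continuous_const).integrable_comp_prodMk
      ((hs.fderiv ℝ).comp_left (g := (· ∘L .inl ℝ E ℝ)) (ContinuousLinearMap.zero_comp _)) z

theorem fourierSnd_fderiv_snd [CompleteSpace F] (hΨ : ContDiff ℝ 1 Ψ)
    (hs : HasCompactSupport Ψ) (ξ : ℝ) (z : E) :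
    fourierSnd (fun p => fderiv ℝ Ψ p (0, 1)) ξ z = (2 * π * I * ξ) • fourierSnd Ψ ξ z := by
  have hderiv : ∀ t, HasDerivAt (fun t => Ψ (z, t)) (fderiv ℝ Ψ (z, t) (0, 1)) t := fun t =>
    ((hΨ.differentiable one_ne_zero) (z, t)).hasFDerivAt.comp_hasDerivAt t
      ((hasDerivAt_const t z).prodMk (hasDerivAt_id t))
  have hderiv' : deriv (fun t => Ψ (z, t)) = fun t => fderiv ℝ Ψ (z, t) (0, 1) :=
    funext fun t => (hderiv t).deriv
  have := fourier_deriv (hΨ.continuous.integrable_comp_prodMk hs z)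
    (fun t => (hderiv t).differentiableAt)
    (hderiv' ▸ hΨ.integrable_fderiv_apply_prodMk hs (0, 1) z)
  rw [hderiv'] at this
  exact congrFun this ξ

end FourierSnd

theorem Continuous.eq_zero_of_fourier_eq_zero {V G : Type*} [NormedAddCommGroup V]
    [InnerProductSpace ℝ V] [FiniteDimensional ℝ V] [MeasurableSpace V] [BorelSpace V]
    [NormedAddCommGroup G] [NormedSpace ℂ G] [CompleteSpace G] {f : V → G}
    (hc : Continuous f) (hf : Integrable f) (h : 𝓕 f = 0) : f = 0 := by
  rw [← hc.fourierInv_fourier_eq hf (h ▸ integrable_zero _ _ _), h]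
  ext
  simp [fourierInv_eq]

theorem eq_zero_of_fourierSnd_eq_zero {E F : Type*} [TopologicalSpace E] [NormedAddCommGroup F]
    [NormedSpace ℂ F] [CompleteSpace F] {Ψ : E × ℝ → F} (hc : Continuous Ψ)
    (hs : HasCompactSupport Ψ) (h : ∀ ξ z, fourierSnd Ψ ξ z = 0) : Ψ = 0 := by
  ext ⟨z, t⟩
  have := (hc.comp (Continuous.prodMk_right z)).eq_zero_of_fourier_eq_zero
    (hc.integrable_comp_prodMk hs z) (funext fun ξ => h ξ z)
  exact congrFun this t

section Complex

variable {F : Type*} [NormedAddCommGroup F] [NormedSpace ℂ F]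

theorem Differentiable.eq_zero_of_forall_norm_gt [CompleteSpace F] {g : ℂ → F}
    (hg : Differentiable ℂ g) {R : ℝ} (h : ∀ z, R < ‖z‖ → g z = 0) : g = 0 := by
  have hev : g =ᶠ[𝓝 ((R + 1 : ℝ) : ℂ)] 0 := by
    refine Filter.eventually_of_mem ((isOpen_lt continuous_const continuous_norm).mem_nhds ?_) h
    rw [mem_ofPred_eq, Complex.norm_real, Real.norm_eq_abs]
    exact (lt_add_one R).trans_le (le_abs_self _)
  ext z
  exact (hg.differentiableOn.analyticOnNhd isOpen_univ)
    |>.eqOn_zero_of_preconnected_of_eventuallyEq_zero isPreconnected_univ (mem_univ _) hev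
      (mem_univ z)

/-- `D 1 + I • D I` is `2 ∂f/∂z̄`. -/
theorem differentiableAt_exp_mul_norm_sq_smul {f : ℂ → F} {D : ℂ →L[ℝ] F} {z : ℂ} (a : ℝ)
    (hf : HasFDerivAt f D z) (hD : D 1 + I • D I = -(2 * a * z) • f z) :
    DifferentiableAt ℂ (fun w => cexp ((a * ‖w‖ ^ 2 : ℝ) : ℂ) • f w) z := by
  have hexp : HasFDerivAt (fun w => cexp ((a * ‖w‖ ^ 2 : ℝ) : ℂ) • f w) _ z :=
    ((ofRealCLM.hasFDerivAt.comp z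
      ((hasStrictFDerivAt_norm_sq z).hasFDerivAt.const_mul a)).cexp).smul hf
  refine differentiableAt_complex_iff_differentiableAt_real.2 ⟨hexp.differentiableAt, ?_⟩
  rw [hexp.fderiv]
  have hDI : D I = I • D 1 + (2 * a * z * I) • f z := by
    have := congrArg (I • ·) hD
    simp only [smul_add, smul_smul, I_mul_I, neg_one_smul] at this
    linear_combination (norm := module) -this
  simp [hDI]
  match_scalars
  · ring
  · linear_combination (-2 * a * cexp (a * ‖z‖ ^ 2) * I) * re_add_im z
      + (2 * a * cexp (a * ‖z‖ ^ 2) * z.im) * I_sq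

end Complex

section Lewy

variable {F : Type*} [NormedAddCommGroup F] [NormedSpace ℂ F] [CompleteSpace F]

def SolvesLewy (Ψ : ℂ × ℝ → F) : Prop :=
  ∀ p, fderiv ℝ Ψ p (1, 0) + I • fderiv ℝ Ψ p (I, 0) = (2 * I * p.1) • fderiv ℝ Ψ p (0, 1)

variable {Ψ : ℂ × ℝ → F}

theorem SolvesLewy.fourierSnd_dbar (hL : SolvesLewy Ψ) (hΨ : ContDiff ℝ 1 Ψ)
    (hs : HasCompactSupport Ψ) (ξ : ℝ) (z : ℂ) :
    𝓕 (fun t => fderiv ℝ Ψ (z, t) ∘L .inl ℝ ℂ ℝ) ξ 1 +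
        I • 𝓕 (fun t => fderiv ℝ Ψ (z, t) ∘L .inl ℝ ℂ ℝ) ξ I =
      -(2 * (2 * π * ξ : ℝ) * z) • fourierSnd Ψ ξ z := by
  rw [fourier_fderiv_comp_inl_apply hΨ hs, fourier_fderiv_comp_inl_apply hΨ hs,
    ← fourierSnd_smul_fst (fun _ => I),
    ← fourierSnd_add (hΨ.integrable_fderiv_apply_prodMk hs _ z)
      ((hΨ.integrable_fderiv_apply_prodMk hs _ z).smul I)]
  have hL' : (fun p => fderiv ℝ Ψ p (1, 0)) + (fun p => I • fderiv ℝ Ψ p (I, 0)) =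
      fun p => (2 * I * p.1) • fderiv ℝ Ψ p (0, 1) := funext hL
  rw [hL', fourierSnd_smul_fst (fun z => 2 * I * z), fourierSnd_fderiv_snd hΨ hs, smul_smul]
  congr 1
  push_cast
  linear_combination (4 * π * ξ * z) * I_sq

theorem SolvesLewy.fourierSnd_eq_zero (hL : SolvesLewy Ψ) (hΨ : ContDiff ℝ 1 Ψ)
    (hs : HasCompactSupport Ψ) (ξ : ℝ) :
    fourierSnd Ψ ξ = 0 := by
  obtain ⟨R, hR⟩ := hs.exists_fourierSnd_eq_zero
  have hG : Differentiable ℂ fun z => cexp ((2 * π * ξ * ‖z‖ ^ 2 : ℝ) : ℂ) • fourierSnd Ψ ξ z :=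
    fun z => differentiableAt_exp_mul_norm_sq_smul (2 * π * ξ)
      (hasFDerivAt_fourierSnd hΨ hs ξ z) (hL.fourierSnd_dbar hΨ hs ξ z)
  have hG0 := hG.eq_zero_of_forall_norm_gt (R := R) fun z hz => by simp [hR ξ z hz]
  ext z
  simpa [Complex.exp_ne_zero] using congrFun hG0 z

end Lewy

noncomputable def lewyChart : (ℂ × ℝ) ≃L[ℝ] (Fin 3 → ℝ) :=
  LinearEquiv.toContinuousLinearEquiv
    { toFun := fun p => ![p.1.re, p.1.im, p.2]
      invFun := fun x => (⟨x 0, x 1⟩, x 2)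
      map_add' := fun p q => by ext i; fin_cases i <;> simp
      map_smul' := fun c p => by ext i; fin_cases i <;> simp
      left_inv := fun p => by simp
      right_inv := fun x => by ext i; fin_cases i <;> simp }

@[simp] theorem lewyChart_apply (p : ℂ × ℝ) : lewyChart p = ![p.1.re, p.1.im, p.2] := rfl

theorem solvesLewy_comp_lewyChart {φ : (Fin 3 → ℝ) → ℂ}
    (hP : ∀ x : Fin 3 → ℝ, -(pd (0 : Fin 3) φ x) - I * pd (1 : Fin 3) φ x
        + 2 * I * ((x 0 : ℂ) + I * (x 1 : ℂ)) * pd (2 : Fin 3) φ x = 0) :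
    SolvesLewy (φ ∘ lewyChart) := by
  intro p
  have h := hP (lewyChart p)
  have hbasis : ∀ j : Fin 3, ∀ v : ℂ × ℝ, lewyChart v = Pi.single j 1 →
      fderiv ℝ (φ ∘ lewyChart) p v = pd j φ (lewyChart p) := fun j v hv => by
    rw [lewyChart.comp_right_fderiv, ContinuousLinearMap.comp_apply,
      ContinuousLinearEquiv.coe_coe, hv]
    rfl
  rw [hbasis 0 (1, 0) (by ext i; fin_cases i <;> simp),
    hbasis 1 (I, 0) (by ext i; fin_cases i <;> simp),
    hbasis 2 (0, 1) (by ext i; fin_cases i <;> simp)]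
  have h0 : lewyChart p 0 = p.1.re := rfl
  have h1 : lewyChart p 1 = p.1.im := rfl
  rw [h0, h1] at h
  simp only [smul_eq_mul]
  linear_combination -h + (2 * I * pd 2 φ (lewyChart p)) * re_add_im p.1

theorem lewy_operator_injective_on_testFunctions_general
    (φ : (Fin 3 → ℝ) → ℂ) (hφ1 : ContDiff ℝ (⊤ : ℕ∞) φ)
    (hφ2 : HasCompactSupport φ)
    (hP : ∀ x : Fin 3 → ℝ,
      -(pd (0 : Fin 3) φ x) - I * pd (1 : Fin 3) φ x
        + 2 * I * ((x 0 : ℂ) + I * (x 1 : ℂ)) * pd (2 : Fin 3) φ x = 0) :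
    φ = 0 := by
  have hΨ : ContDiff ℝ 1 (φ ∘ lewyChart) :=
    (hφ1.of_le (by norm_num)).comp lewyChart.contDiff
  have hs : HasCompactSupport (φ ∘ lewyChart) := hφ2.comp_homeomorph lewyChart.toHomeomorph
  have hΨ0 : φ ∘ lewyChart = 0 := eq_zero_of_fourierSnd_eq_zero hΨ.continuous hs fun ξ z => by
    rw [(solvesLewy_comp_lewyChart hP).fourierSnd_eq_zero hΨ hs ξ, Pi.zero_apply]
  funext x
  simpa using congrFun hΨ0 (lewyChart.symm x)

/-- The Lewy operator `P(x,∂) = −∂/∂x₁ − i ∂/∂y₁ + 2i(x₁ + i y₁) ∂/∂x₂`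
is injective on `D(Ω)` for every open `Ω ⊆ ℝ³`: a smooth function with compact
support in `Ω` satisfying the (transposed) Lewy equation vanishes identically. -/
theorem lewy_operator_injective_on_testFunctions
    (Ω : Set (Fin 3 → ℝ)) (hΩ : IsOpen Ω)
    (φ : (Fin 3 → ℝ) → ℂ) (hφ1 : ContDiff ℝ (⊤ : ℕ∞) φ)
    (hφ2 : HasCompactSupport φ) (hφ3 : tsupport φ ⊆ Ω)
    (hP : ∀ x : Fin 3 → ℝ,
      -(pd (0 : Fin 3) φ x) - I * pd (1 : Fin 3) φ x
        + 2 * I * ((x 0 : ℂ) + I * (x 1 : ℂ)) * pd (2 : Fin 3) φ x = 0) :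
    φ = 0 :=
  lewy_operator_injective_on_testFunctions_general φ hφ1 hφ2 hP
end

section
/- Let Ω ⊆ ℝⁿ be open and let a : (Fin n → ℕ) → ℂ be a finitely supported coefficient function that is not identically zero, defining the nonzero constant-coefficient operator P(∂) = Σ_p a_p ∂^p. Then P(∂) : D*(Ω) → D*(Ω) is surjective: for every linear functional F on D(Ω) there exists a linear functional U on D(Ω) such that U(Σ_p (−1)^{|p|} a_p ∂^p φ) = F(φ) for all φ ∈ D(Ω). (Here Σ_p (−1)^{|p|} a_p ∂^p φ is the transposed operator applied to φ, and it again belongs to D(Ω).) -/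
/-! Under the Fourier transform the transposed operator becomes multiplication by its symbol,
a nonzero polynomial, which cannot vanish on an open set. Since the Fourier transform of a test
function is continuous and determines it, the transposed operator is injective on `D(Ω)`. An
injective linear map has a linear left inverse `G`, and `U = F ∘ G` solves `P(∂)U = F`. -/

open SchwartzMap LineDeriv FourierTransform Real

open MvPolynomial Metric in
theorem MvPolynomial.dense_setOf_eval_ofReal_ne_zero {σ 𝕜 : Type*} [Fintype σ] [RCLike 𝕜]
    {P : MvPolynomial σ 𝕜} (hP : P ≠ 0) :
    Dense {x : σ → ℝ | eval (fun i => (x i : 𝕜)) P ≠ 0} := by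
  refine Metric.dense_iff.2 fun x₀ r hr => ?_
  by_contra! hzero
  choose T hTball hTcard using fun i =>
    (Set.Ioo_infinite (by linarith : x₀ i - r < x₀ i + r)).exists_subset_card_eq
      (P.totalDegree + 1)
  refine hP (eq_zero_of_eval_zero_at_prod_finset P (fun i => (T i).image (↑)) (fun i => ?_)
    fun x hx => ?_)
  · rw [Finset.card_image_of_injective _ RCLike.ofReal_injective, hTcard]
    exact Nat.lt_succ_of_le (degreeOf_le_totalDegree P i)
  · choose y hyT hyx using fun i => Finset.mem_image.1 (hx i)
    have hy : y ∈ ball x₀ r := by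
      rw [ball_pi x₀ hr]
      exact fun i _ => by simpa [Real.ball_eq_Ioo] using hTball i (hyT i)
    obtain rfl : (fun i => (y i : 𝕜)) = x := _root_.funext hyx
    by_contra hne
    exact hzero.subset ⟨hy, hne⟩

/- The factor `(2πi)^|p|` comes from the normalisation `𝓕 (∂ⱼ f) ξ = 2πi ξⱼ 𝓕 f ξ`. -/
noncomputable def transposeSymbol {n : ℕ} (a : (Fin n → ℕ) →₀ ℂ) : MvPolynomial (Fin n) ℂ :=
  ∑ p ∈ a.support, MvPolynomial.monomial (Finsupp.equivFunOnFinite.symm p)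
    ((-1 : ℂ) ^ (∑ j, p j) * a p * (2 * π * Complex.I) ^ (∑ j, p j))

theorem transposeSymbol_ne_zero {n : ℕ} {a : (Fin n → ℕ) →₀ ℂ} (ha : a ≠ 0) :
    transposeSymbol a ≠ 0 := by
  obtain ⟨p₀, hp₀⟩ := Finsupp.support_nonempty_iff.2 ha
  intro h
  have := congrArg (MvPolynomial.coeff (Finsupp.equivFunOnFinite.symm p₀)) h
  rw [transposeSymbol, MvPolynomial.coeff_sum, Finset.sum_eq_single p₀] at this
  · simp only [MvPolynomial.coeff_monomial, if_true, MvPolynomial.coeff_zero] at this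
    exact mul_ne_zero (mul_ne_zero (pow_ne_zero _ (by norm_num)) (Finsupp.mem_support_iff.1 hp₀))
      (pow_ne_zero _ Complex.two_pi_I_ne_zero) this
  · intro p _ hp
    rw [MvPolynomial.coeff_monomial, if_neg (Finsupp.equivFunOnFinite.symm.injective.ne hp)]
  · exact fun h => absurd hp₀ h

theorem eval_transposeSymbol {n : ℕ} (a : (Fin n → ℕ) →₀ ℂ) (ξ : Fin n → ℝ) :
    MvPolynomial.eval (fun j => (ξ j : ℂ)) (transposeSymbol a) =
      ∑ p ∈ a.support, (-1 : ℂ) ^ (∑ j, p j) * a p * ∏ j, (2 * π * Complex.I * ξ j) ^ p j := by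
  simp only [transposeSymbol, map_sum, MvPolynomial.eval_monomial]
  refine Finset.sum_congr rfl fun p _ => ?_
  rw [Finsupp.prod_fintype _ _ (fun _ => pow_zero _), mul_assoc]
  simp [mul_pow, Finset.prod_mul_distrib, Finset.prod_pow_eq_pow_sum]

namespace Dspace

variable {n : ℕ} {Ω : Set (Fin n → ℝ)}

theorem differentiable (φ : Dspace n Ω) : Differentiable ℝ (φ : (Fin n → ℝ) → ℂ) :=
  φ.2.1.differentiable (by simp)

theorem pd_mem {φ : (Fin n → ℝ) → ℂ} (hφ : φ ∈ Dspace n Ω) (j : Fin n) :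
    _root_.pd j φ ∈ Dspace n Ω :=
  ⟨(hφ.1.fderiv_right le_rfl).clm_apply contDiff_const,
    hφ.2.1.fderiv_apply (𝕜 := ℝ) (Pi.single j 1), (tsupport_fderiv_apply_subset ℝ _).trans hφ.2.2⟩

noncomputable def pd (j : Fin n) : Module.End ℂ (Dspace n Ω) where
  toFun φ := ⟨_root_.pd j φ, pd_mem φ.2 j⟩
  map_add' φ ψ := Subtype.ext <| funext fun x => by
    simp [_root_.pd, fderiv_add (differentiable φ x) (differentiable ψ x)]
  map_smul' c φ := Subtype.ext <| funext fun x => by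
    simp [_root_.pd, fderiv_const_smul (differentiable φ x) c]

noncomputable def multiPD (p : Fin n → ℕ) : Module.End ℂ (Dspace n Ω) :=
  (List.finRange n).foldr (fun j T => pd j ^ p j * T) 1

theorem coe_multiPD (p : Fin n → ℕ) (φ : Dspace n Ω) :
    (multiPD p φ : (Fin n → ℝ) → ℂ) = _root_.multiPD p φ := by
  have hpd (j : Fin n) : Function.Semiconj (Subtype.val : Dspace n Ω → _) (pd j) (_root_.pd j) :=
    fun _ => rfl
  suffices ∀ (l : List (Fin n)) (φ : Dspace n Ω),
      ((l.foldr (fun j T => pd j ^ p j * T) 1 φ : Dspace n Ω) : (Fin n → ℝ) → ℂ) =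
        l.foldr (fun j f => (_root_.pd j)^[p j] ∘ f) id φ from this _ φ
  intro l
  induction l with
  | nil => exact fun _ => rfl
  | cons j l ih =>
    intro φ
    simp only [List.foldr_cons, Module.End.mul_apply, Module.End.pow_apply, Function.comp_apply,
      ← ih]
    exact (hpd j).iterate_right _ _

noncomputable def transposePDO (a : (Fin n → ℕ) →₀ ℂ) : Module.End ℂ (Dspace n Ω) :=
  ∑ p ∈ a.support, ((-1 : ℂ) ^ (∑ j, p j) * a p) • multiPD p

theorem coe_transposePDO (a : (Fin n → ℕ) →₀ ℂ) (φ : Dspace n Ω) :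
    (transposePDO a φ : (Fin n → ℝ) → ℂ) = fun x => ∑ p ∈ a.support,
      (-1 : ℂ) ^ (∑ j, p j) * a p * _root_.multiPD p (φ : (Fin n → ℝ) → ℂ) x := by
  ext x
  simp [transposePDO, Finset.sum_apply, coe_multiPD, mul_assoc]

noncomputable def toSchwartzMap : Dspace n Ω →ₗ[ℂ] 𝓢(Fin n → ℝ, ℂ) where
  toFun φ := φ.2.2.1.toSchwartzMap φ.2.1
  map_add' _ _ := rfl
  map_smul' _ _ := rfl

theorem toSchwartzMap_injective : Function.Injective (toSchwartzMap (n := n) (Ω := Ω)) :=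
  fun _ _ h => Subtype.ext (congrArg DFunLike.coe h)

theorem toSchwartzMap_pd (j : Fin n) (φ : Dspace n Ω) :
    toSchwartzMap (pd j φ) = ∂_{(Pi.single j 1 : Fin n → ℝ)} (toSchwartzMap φ) := by
  ext x
  exact (lineDerivOp_apply_eq_fderiv _ (toSchwartzMap φ) x).symm

noncomputable def fourier : Dspace n Ω →ₗ[ℂ] 𝓢(EuclideanSpace ℝ (Fin n), ℂ) :=
  (fourierEquiv ℂ _).toLinearMap ∘ₗ
    (compCLMOfContinuousLinearEquiv ℂ (EuclideanSpace.equiv (Fin n) ℝ)).toLinearMap ∘ₗ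
      toSchwartzMap

theorem fourier_apply (φ : Dspace n Ω) : fourier φ =
    𝓕 (compCLMOfContinuousLinearEquiv ℂ (EuclideanSpace.equiv (Fin n) ℝ) (toSchwartzMap φ)) :=
  rfl

theorem fourier_injective : Function.Injective (fourier (n := n) (Ω := Ω)) := by
  intro φ ψ h
  rw [fourier_apply, fourier_apply] at h
  have h' := (fourierEquiv ℂ _).injective h
  apply toSchwartzMap_injective
  ext x
  exact congr($h' ((EuclideanSpace.equiv (Fin n) ℝ).symm x))

theorem fourier_pd (j : Fin n) (φ : Dspace n Ω) (ξ : EuclideanSpace ℝ (Fin n)) :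
    fourier (pd j φ) ξ = 2 * π * Complex.I * ξ j * fourier φ ξ := by
  have hcomp := lineDerivOp_compCLMOfContinuousLinearEquiv (𝕜 := ℂ) (EuclideanSpace.single j 1)
    (EuclideanSpace.equiv (Fin n) ℝ) (toSchwartzMap φ)
  rw [show EuclideanSpace.equiv (Fin n) ℝ (EuclideanSpace.single j 1) = Pi.single j 1 from rfl]
    at hcomp
  have hinner : (inner ℝ · (EuclideanSpace.single j (1 : ℝ))).HasTemperateGrowth := by fun_prop
  rw [fourier_apply, fourier_apply, toSchwartzMap_pd, ← hcomp, fourier_lineDerivOp_eq, smul_apply,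
    smulLeftCLM_apply_apply hinner, EuclideanSpace.inner_single_right]
  simp [mul_assoc]

theorem fourier_multiPD (p : Fin n → ℕ) (φ : Dspace n Ω) (ξ : EuclideanSpace ℝ (Fin n)) :
    fourier (multiPD p φ) ξ = (∏ j, (2 * π * Complex.I * ξ j) ^ p j) * fourier φ ξ := by
  have hpd (j : Fin n) (k : ℕ) (ψ : Dspace n Ω) :
      fourier ((pd j)^[k] ψ) ξ = (2 * π * Complex.I * ξ j) ^ k * fourier ψ ξ := by
    induction k with
    | zero => simp
    | succ k ih => rw [Function.iterate_succ_apply', fourier_pd, ih]; ring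
  suffices ∀ (l : List (Fin n)) (φ : Dspace n Ω),
      fourier (l.foldr (fun j T => pd j ^ p j * T) 1 φ) ξ =
        (l.map fun j => (2 * π * Complex.I * ξ j) ^ p j).prod * fourier φ ξ by
    rw [Fin.prod_univ_def]
    exact this _ φ
  intro l
  induction l with
  | nil => simp
  | cons j l ih =>
    intro φ
    rw [List.foldr_cons, Module.End.mul_apply, Module.End.pow_apply, hpd, ih, List.map_cons,
      List.prod_cons, ← mul_assoc]

theorem fourier_transposePDO (a : (Fin n → ℕ) →₀ ℂ) (φ : Dspace n Ω)
    (ξ : EuclideanSpace ℝ (Fin n)) :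
    fourier (transposePDO a φ) ξ =
      MvPolynomial.eval (fun j => (ξ j : ℂ)) (transposeSymbol a) * fourier φ ξ := by
  simp [transposePDO, eval_transposeSymbol, fourier_multiPD, Finset.sum_mul, mul_assoc]

theorem transposePDO_injective {a : (Fin n → ℕ) →₀ ℂ} (ha : a ≠ 0) :
    Function.Injective (transposePDO a : Module.End ℂ (Dspace n Ω)) := by
  refine (injective_iff_map_eq_zero _).2 fun φ hφ => fourier_injective ?_
  have hdense : Dense {ξ : EuclideanSpace ℝ (Fin n) |
      MvPolynomial.eval (fun j => (ξ j : ℂ)) (transposeSymbol a) ≠ 0} :=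
    (MvPolynomial.dense_setOf_eval_ofReal_ne_zero (transposeSymbol_ne_zero ha)).preimage
      (EuclideanSpace.equiv (Fin n) ℝ).toHomeomorph.isOpenMap
  rw [map_zero]
  refine DFunLike.coe_injective (Continuous.ext_on hdense (fourier φ).continuous continuous_const
    fun ξ hξ => ?_)
  have hsymbol := fourier_transposePDO a φ ξ
  rw [hφ, map_zero] at hsymbol
  exact (mul_eq_zero.1 hsymbol.symm).resolve_left hξ

end Dspace

theorem constCoeff_PDO_surjective_on_algebraicDual_general
    (n : ℕ) (Ω : Set (Fin n → ℝ))
    (a : (Fin n → ℕ) →₀ ℂ) (ha : a ≠ 0)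
    (F : Dspace n Ω →ₗ[ℂ] ℂ) :
    ∃ U : Dspace n Ω →ₗ[ℂ] ℂ, ∀ φ : Dspace n Ω,
      ∃ hmem : (fun x => ∑ p ∈ a.support,
          (-1 : ℂ) ^ (∑ j, p j) * a p * multiPD p (φ : (Fin n → ℝ) → ℂ) x)
          ∈ Dspace n Ω,
        U ⟨_, hmem⟩ = F φ := by
  obtain ⟨G, hG⟩ := (Dspace.transposePDO a).exists_leftInverse_of_injective
    (LinearMap.ker_eq_bot.2 (Dspace.transposePDO_injective ha))
  refine ⟨F ∘ₗ G, fun φ => ⟨Dspace.coe_transposePDO a φ ▸ (Dspace.transposePDO a φ).2, ?_⟩⟩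
  refine (congrArg (F ∘ₗ G) (Subtype.ext (Dspace.coe_transposePDO a φ).symm)).trans ?_
  rw [LinearMap.comp_apply, ← LinearMap.comp_apply G, hG, LinearMap.id_apply]

/-- A nonzero constant-coefficient operator `P(∂) = Σ_p a_p ∂^p` is surjective
on the algebraic dual `D*(Ω)` for every open `Ω ⊆ ℝⁿ`: given any linear
functional `F` on `D(Ω)` there is a linear functional `U` on `D(Ω)` with
`U(ᵗP(∂)φ) = F(φ)` for all test functions `φ`, where
`ᵗP(∂)φ = Σ_p (−1)^{|p|} a_p ∂^p φ` again belongs to `D(Ω)`. -/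
theorem constCoeff_PDO_surjective_on_algebraicDual
    (n : ℕ) (Ω : Set (Fin n → ℝ)) (hΩ : IsOpen Ω)
    (a : (Fin n → ℕ) →₀ ℂ) (ha : a ≠ 0)
    (F : Dspace n Ω →ₗ[ℂ] ℂ) :
    ∃ U : Dspace n Ω →ₗ[ℂ] ℂ, ∀ φ : Dspace n Ω,
      ∃ hmem : (fun x => ∑ p ∈ a.support,
          (-1 : ℂ) ^ (∑ j, p j) * a p * multiPD p (φ : (Fin n → ℝ) → ℂ) x)
          ∈ Dspace n Ω,
        U ⟨_, hmem⟩ = F φ :=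
  constCoeff_PDO_surjective_on_algebraicDual_general n Ω a ha F
end
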